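/- arXiv:1911.04269 — 11 statements merged into one kernel-verified Lean document; each statement's English description precedes it below -/
import Mathlib

section
/- Let q ≥ 2 and let u be an integer with u ≥ q³+q². Define Ψ(u) = {(d,e) ∈ ℤ² : e ≥ 0, 0 ≤ d < q+1, (q²+q)e + q²d ≤ u}. Then #Ψ(u) = (−q² + q + 2)/2 + ⌊u/q⌋. -/
/-!
Split Ψ(u) into the columns `d = 0, …, q`; column `d` has `⌊(u - q²d)/(q² + q)⌋ + 1` points
(the bound `u ≥ q³` keeps every column nonempty). Dividing in two steps, first by `q` and then by
`q + 1`, rewrites this as `⌊(⌊u/q⌋ + d)/(q + 1)⌋ - d + 1`, and Hermite's identity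
`∑_{d<n} ⌊(m + d)/n⌋ = m` sums the floors to `⌊u/q⌋`; the rest is
`∑ (1 - d) = (q + 1) - q(q + 1)/2`.
-/

open Finset

/-- Hermite's identity. -/
theorem Int.sum_range_add_ediv (m : ℤ) {n : ℕ} (hn : 0 < n) :
    ∑ i ∈ Finset.range n, (m + i) / n = m := by
  have hshift (m : ℤ) :
      ∑ i ∈ Finset.range n, (m + 1 + i) / n = ∑ i ∈ Finset.range n, (m + i) / n + 1 := by
    have hsucc := sum_range_succ (fun i : ℕ => (m + i) / n) n
    have hsucc' := sum_range_succ' (fun i : ℕ => (m + i) / n) n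
    have hwrap : (m + n) / n = m / n + 1 := by
      simpa using Int.add_mul_ediv_right m 1 (c := n) (by omega)
    simp only [Nat.cast_add, Nat.cast_one, Nat.cast_zero, add_zero, ← add_assoc,
      add_right_comm m _ (1 : ℤ)] at hsucc'
    linarith
  induction m using Int.induction_on with
  | zero =>
    refine sum_eq_zero fun i hi => ?_
    simpa using Int.ediv_eq_zero_of_lt (Int.natCast_nonneg i) (by simpa using mem_range.mp hi)
  | succ k ih => rw [hshift, ih]
  | pred k ih =>
    have h := hshift (-k - 1)
    rw [sub_add_cancel, ih] at h
    linarith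

theorem Finset.card_biUnion_singleton_product {α β : Type*} [DecidableEq α] [DecidableEq β]
    (s : Finset α) (t : α → Finset β) :
    #(s.biUnion fun a => {a} ×ˢ t a) = ∑ a ∈ s, #(t a) := by
  rw [card_biUnion fun a _ b _ hab => disjoint_product.mpr (.inl (disjoint_singleton.mpr hab))]
  simp

def Psi (q u : ℤ) : Set (ℤ × ℤ) :=
  {p | 0 ≤ p.2 ∧ 0 ≤ p.1 ∧ p.1 < q + 1 ∧ (q ^ 2 + q) * p.2 + q ^ 2 * p.1 ≤ u}

theorem Psi_eq_biUnion {q : ℤ} (u : ℤ) (hq : 0 < q) :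
    Psi q u = ↑((Icc 0 q).biUnion fun d => {d} ×ˢ Icc 0 ((u - q ^ 2 * d) / (q ^ 2 + q))) := by
  ext ⟨d, e⟩
  simp only [Psi, Set.mem_ofPred_eq, coe_biUnion, Set.mem_iUnion, mem_coe, mem_product,
    mem_singleton, mem_Icc, Int.le_ediv_iff_mul_le (by positivity : 0 < q ^ 2 + q)]
  constructor
  · rintro ⟨he, hd, hdq, hle⟩
    exact ⟨d, ⟨hd, by omega⟩, rfl, he, by linarith⟩
  · rintro ⟨d, ⟨hd, hdq⟩, rfl, he, hle⟩
    exact ⟨he, hd, by omega, by linarith⟩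

theorem ncard_Psi {q u : ℤ} (hq : 0 < q) (hu : q ^ 3 ≤ u) :
    ((Psi q u).ncard : ℤ) = ∑ d ∈ Icc 0 q, ((u - q ^ 2 * d) / (q ^ 2 + q) + 1) := by
  rw [Psi_eq_biUnion u hq, Set.ncard_coe_finset, card_biUnion_singleton_product, Nat.cast_sum]
  refine sum_congr rfl fun d hd => ?_
  have hrow : 0 ≤ u - q ^ 2 * d := by
    have := (mem_Icc.mp hd).2
    nlinarith
  have hheight : 0 ≤ (u - q ^ 2 * d) / (q ^ 2 + q) := Int.ediv_nonneg hrow (by positivity)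
  rw [Int.card_Icc_of_le _ _ (by omega)]
  ring

theorem Int.sub_sq_mul_ediv_sq_add_self {q : ℤ} (u d : ℤ) (hq : 0 < q) :
    (u - q ^ 2 * d) / (q ^ 2 + q) = (u / q + d) / (q + 1) - d := by
  have hcol : u / q - q * d = (u / q + d) - d * (q + 1) := by ring
  rw [show q ^ 2 + q = q * (q + 1) by ring, ← Int.ediv_ediv_of_nonneg hq.le,
    show u - q ^ 2 * d = u - q * d * q by ring, Int.sub_mul_ediv_right _ _ hq.ne', hcol,
    Int.sub_mul_ediv_right _ _ (by omega)]

theorem sum_Icc_add_ediv_sub_add_one (n : ℕ) (M : ℤ) :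
    ∑ d ∈ Icc (0 : ℤ) n, ((M + d) / (n + 1) - d + 1) = M + (-(n : ℤ) ^ 2 + n + 2) / 2 := by
  have hermite := Int.sum_range_add_ediv M n.succ_pos
  have gauss : (∑ i ∈ range (n + 1), (i : ℤ)) * 2 = (n + 1) * n := by
    have h := sum_range_id_mul_two (n + 1)
    rw [Nat.add_sub_cancel] at h
    rw [← Nat.cast_sum]
    exact_mod_cast h
  rw [Int.Icc_eq_finset_map, sum_map, sub_zero, show ((n : ℤ) + 1).toNat = n + 1 by omega]
  simp only [Function.Embedding.trans_apply, Nat.castEmbedding_apply, addLeftEmbedding_apply,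
    zero_add, sum_add_distrib, sum_sub_distrib, sum_const, card_range, nsmul_one]
  push_cast at hermite ⊢
  rw [hermite, show -(n : ℤ) ^ 2 + n + 2 = (n + 1 - ∑ i ∈ range (n + 1), (i : ℤ)) * 2 by
    linear_combination gauss, Int.mul_ediv_cancel _ two_ne_zero]
  ring

/-- For u ≥ q³+q², the set Ψ(u) = {(d,e) : e ≥ 0, 0 ≤ d < q+1, (q²+q)e + q²d ≤ u}
    has cardinality (−q²+q+2)/2 + ⌊u/q⌋. -/
theorem stmt_3 (q u : ℤ) (hq : 2 ≤ q) (hu : q ^ 3 + q ^ 2 ≤ u) :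
    (({p : ℤ × ℤ | 0 ≤ p.2 ∧ 0 ≤ p.1 ∧ p.1 < q + 1 ∧
        (q ^ 2 + q) * p.2 + q ^ 2 * p.1 ≤ u}).ncard : ℤ)
      = (-q ^ 2 + q + 2) / 2 + u / q := by
  obtain ⟨n, rfl⟩ := Int.eq_ofNat_of_zero_le (by omega : 0 ≤ q)
  have hn : 0 < (n : ℤ) := by omega
  change ((Psi n u).ncard : ℤ) = _
  rw [ncard_Psi hn (by linarith [sq_nonneg (n : ℤ)])]
  simp_rw [Int.sub_sq_mul_ediv_sq_add_self u _ hn]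
  rw [sum_Icc_add_ediv_sub_add_one]
  ring
end

section
/- Let q ≥ 2 and let u ≥ q³+q² be an integer. Then the sum over a = 0, 1, 2, ... of the cardinalities of Ψ_a(u) = {(i,j) ∈ ℤ² : 0 ≤ i < q²+q, 0 ≤ qi + (q²+q)j < q²+q, q²i + (q³−q)j ≤ u − (q³+q²)a} equals (−q² + q + 2)/2 + ⌊u/q⌋. -/
/-- The lattice point set Ψ_a(u). -/
def PsiA (q a u : ℤ) : Set (ℤ × ℤ) :=
  {p | 0 ≤ p.1 ∧ p.1 < q ^ 2 + q ∧
       0 ≤ q * p.1 + (q ^ 2 + q) * p.2 ∧ q * p.1 + (q ^ 2 + q) * p.2 < q ^ 2 + q ∧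
       q ^ 2 * p.1 + (q ^ 3 - q) * p.2 ≤ u - (q ^ 3 + q ^ 2) * a}

/-!
For `(i, j) ∈ Ψ_a(u)` put `m = -j` and `r = i + (q + 1) j`; then `0 ≤ m < q`, `0 ≤ r ≤ q`, and
`w = q i + (q² - 1) j + (q² + q) a = q (r + (q + 1) a) + (q + 1) m`, while the last condition
defining `Ψ_a(u)` says exactly `q w ≤ u`. As `r + (q + 1) a` runs over all `n ≥ 0`, the triples
`(a, i, j)` correspond bijectively to the elements `w = q n + (q + 1) m` of the numerical semigroup
`⟨q, q + 1⟩` in `[0, ⌊u/q⌋]`. That semigroup has the `q (q - 1) / 2` gaps `m + k q` with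
`0 ≤ k < m < q`, all below `q² ≤ ⌊u/q⌋`, so the sum is `⌊u/q⌋ + 1 - q (q - 1) / 2`.
-/

open Finset

section
variable {q a u : ℤ}

lemma snd_bounds_of_mem_psiA {p : ℤ × ℤ} (hq : 0 < q) (hp : p ∈ PsiA q a u) :
    1 - q ≤ p.2 ∧ p.2 ≤ 0 := by
  obtain ⟨hi0, hi1, h0, h1, -⟩ := hp
  have hQ : 0 < q ^ 2 + q := by positivity
  constructor
  · by_contra! h
    nlinarith
  · by_contra! h
    nlinarith

lemma psiA_eq_empty (hq : 0 < q) (h : u < (q ^ 3 + q ^ 2) * a) : PsiA q a u = ∅ := by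
  refine Set.eq_empty_of_forall_notMem fun p hp => ?_
  have hj := (snd_bounds_of_mem_psiA hq hp).2
  obtain ⟨-, -, h0, -, hu⟩ := hp
  nlinarith

lemma psiA_subset (hq : 0 < q) : PsiA q a u ⊆ ↑(Ico 0 (q ^ 2 + q) ×ˢ Icc (1 - q) 0) :=
  fun p hp => by
    simpa only [coe_product, coe_Ico, coe_Icc, Set.mem_prod, Set.mem_Ico, Set.mem_Icc]
      using ⟨⟨hp.1, hp.2.1⟩, snd_bounds_of_mem_psiA hq hp⟩

open scoped Classical in
noncomputable def psiTriples (q u : ℤ) (A : ℕ) : Finset (Σ _ : ℕ, ℤ × ℤ) :=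
  (range A).sigma fun a => (Ico 0 (q ^ 2 + q) ×ˢ Icc (1 - q) 0).filter (· ∈ PsiA q a u)

lemma mem_psiTriples {A : ℕ} {x : Σ _ : ℕ, ℤ × ℤ} (hq : 0 < q) :
    x ∈ psiTriples q u A ↔ x.1 < A ∧ x.2 ∈ PsiA q x.1 u := by
  classical
  simp only [psiTriples, mem_sigma, mem_range, mem_filter, and_congr_right_iff,
    and_iff_right_iff_imp]
  exact fun _ hp => psiA_subset hq hp

lemma card_psiTriples (hq : 0 < q) (A : ℕ) :
    #(psiTriples q u A) = ∑ a ∈ range A, (PsiA q a u).ncard := by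
  classical
  rw [psiTriples, card_sigma]
  refine sum_congr rfl fun a _ => ?_
  rw [← Set.ncard_coe_finset, coe_filter]
  exact congrArg Set.ncard (Set.ext fun p => and_iff_right_of_imp fun hp => psiA_subset hq hp)

/-- `⟨q, q + 1⟩ ∩ [0, N]`: a representation `w = q n + (q + 1) m` with `n ≥ 0` can be taken with
`0 ≤ m < q`, and then `m = w % q`. -/
noncomputable def semigroupUpTo (q N : ℤ) : Finset ℤ :=
  (Icc 0 N).filter fun w => (q + 1) * (w % q) ≤ w

def psiEncode (q : ℤ) (x : Σ _ : ℕ, ℤ × ℤ) : ℤ :=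
  q * x.2.1 + (q ^ 2 - 1) * x.2.2 + (q ^ 2 + q) * x.1

def psiDecode (q w : ℤ) : Σ _ : ℕ, ℤ × ℤ :=
  ⟨((w / q - w % q) / (q + 1)).toNat,
    ((q + 1) * (w % q) + (w / q - w % q) % (q + 1), -(w % q))⟩

lemma psiEncode_emod {x : Σ _ : ℕ, ℤ × ℤ} (hj : 1 - q ≤ x.2.2 ∧ x.2.2 ≤ 0) :
    psiEncode q x % q = -x.2.2 := by
  have : psiEncode q x = -x.2.2 + q * (x.2.1 + q * x.2.2 + (q + 1) * x.1) := by
    unfold psiEncode; ring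
  rw [this, Int.add_mul_emod_self_left, Int.emod_eq_of_lt (by omega) (by omega)]

lemma psiEncode_mem_semigroupUpTo {x : Σ _ : ℕ, ℤ × ℤ} (hq : 0 < q) (hx : x.2 ∈ PsiA q x.1 u) :
    psiEncode q x ∈ semigroupUpTo q (u / q) := by
  have hj := snd_bounds_of_mem_psiA hq hx
  obtain ⟨-, -, h0, -, hu⟩ := hx
  have ha : (0 : ℤ) ≤ x.1 := x.1.cast_nonneg
  rw [semigroupUpTo, mem_filter, mem_Icc, Int.le_ediv_iff_mul_le hq, psiEncode_emod hj]
  unfold psiEncode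
  exact ⟨⟨by nlinarith, by nlinarith⟩, by nlinarith⟩

lemma exists_psiDecode_eq {w : ℤ} (hq : 0 < q) (hw : (q + 1) * (w % q) ≤ w) :
    ∃ m r a : ℤ, 0 ≤ m ∧ m < q ∧ 0 ≤ r ∧ r < q + 1 ∧ 0 ≤ a ∧
      w = q * (r + (q + 1) * a) + (q + 1) * m ∧
      psiDecode q w = ⟨a.toNat, ((q + 1) * m + r, -m)⟩ := by
  have hdiv := Int.mul_ediv_add_emod w q
  have hn : 0 ≤ w / q - w % q := by nlinarith
  have hdiv' := Int.mul_ediv_add_emod (w / q - w % q) (q + 1)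
  refine ⟨w % q, (w / q - w % q) % (q + 1), (w / q - w % q) / (q + 1), Int.emod_nonneg _ hq.ne',
    Int.emod_lt_of_pos _ hq, Int.emod_nonneg _ (by omega), Int.emod_lt_of_pos _ (by omega),
    Int.ediv_nonneg hn (by omega), by linear_combination -hdiv - q * hdiv', rfl⟩

lemma psiDecode_mem_psiTriples {A : ℕ} {w : ℤ} (hq : 0 < q) (hw : w ∈ semigroupUpTo q (u / q))
    (hA : u / q < A) : psiDecode q w ∈ psiTriples q u A := by
  rw [semigroupUpTo, mem_filter, mem_Icc] at hw
  obtain ⟨⟨hw0, hwN⟩, hw⟩ := hw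
  have hwu := (Int.le_ediv_iff_mul_le hq).mp hwN
  obtain ⟨m, r, a, hm0, hmq, hr0, hrq, ha0, rfl, hdec⟩ := exists_psiDecode_eq hq hw
  have haw : a ≤ q * (r + (q + 1) * a) + (q + 1) * m := by
    have : a ≤ q * (q + 1) * a := le_mul_of_one_le_left ha0 (by nlinarith)
    nlinarith [mul_nonneg hq.le hr0, mul_nonneg (by omega : (0 : ℤ) ≤ q + 1) hm0]
  rw [hdec, mem_psiTriples hq]
  dsimp only
  rw [Int.toNat_of_nonneg ha0]
  exact ⟨by omega, by nlinarith, by nlinarith, by nlinarith, by nlinarith, by nlinarith⟩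

lemma psiDecode_psiEncode {x : Σ _ : ℕ, ℤ × ℤ} (hq : 0 < q) (hx : x.2 ∈ PsiA q x.1 u) :
    psiDecode q (psiEncode q x) = x := by
  obtain ⟨a, i, j⟩ := x
  have hj := snd_bounds_of_mem_psiA hq hx
  obtain ⟨-, -, h0, h1, -⟩ := hx
  have hmod := psiEncode_emod hj
  dsimp only at hj h0 h1 hmod
  have hdiv : psiEncode q ⟨a, i, j⟩ / q = i + q * j + (q + 1) * a :=
    ((Int.ediv_emod_unique (r := -j) hq).mpr ⟨by unfold psiEncode; ring, by omega, by omega⟩).1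
  have hn := (Int.ediv_emod_unique (a := i + (q + 1) * j + (q + 1) * a) (b := q + 1)
    (r := i + (q + 1) * j) (q := a) (by omega)).mpr ⟨by ring, by nlinarith, by nlinarith⟩
  simp only [psiDecode, hmod, hdiv]
  rw [show i + q * j + (q + 1) * a - -j = i + (q + 1) * j + (q + 1) * a by ring, hn.1, hn.2,
    Int.toNat_natCast, neg_neg, show (q + 1) * -j + (i + (q + 1) * j) = i by ring]

lemma psiEncode_psiDecode {w : ℤ} (hq : 0 < q) (hw : (q + 1) * (w % q) ≤ w) :
    psiEncode q (psiDecode q w) = w := by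
  obtain ⟨m, r, a, -, -, -, -, ha0, rfl, hdec⟩ := exists_psiDecode_eq hq hw
  rw [hdec, psiEncode, Int.toNat_of_nonneg ha0]
  ring

lemma card_psiTriples_eq {A : ℕ} (hq : 0 < q) (hA : u / q < A) :
    #(psiTriples q u A) = #(semigroupUpTo q (u / q)) :=
  card_nbij' (psiEncode q) (psiDecode q)
    (fun _ hx => psiEncode_mem_semigroupUpTo hq ((mem_psiTriples hq).mp hx).2)
    (fun _ hw => psiDecode_mem_psiTriples hq hw hA)
    (fun _ hx => psiDecode_psiEncode hq ((mem_psiTriples hq).mp hx).2)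
    (fun _ hw => psiEncode_psiDecode hq (mem_filter.mp hw).2)

end

lemma two_mul_card_gaps {q N : ℤ} (hq : 0 < q) (hN : q ^ 2 - q ≤ N + 1) :
    2 * (#{w ∈ Icc 0 N | ¬(q + 1) * (w % q) ≤ w} : ℤ) = q * (q - 1) := by
  lift q to ℕ using hq.le
  have hcard : #((range q).sigma fun m => range m) =
      #{w ∈ Icc 0 N | ¬((q : ℤ) + 1) * (w % q) ≤ w} := by
    refine card_nbij' (fun x => x.1 + x.2 * q) (fun w => ⟨(w % q).toNat, (w / q).toNat⟩)
      ?_ ?_ ?_ ?_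
    · rintro ⟨m, k⟩ hx
      simp only [mem_coe, mem_sigma, mem_range] at hx
      have hmod : ((m : ℤ) + k * q) % q = m := by
        rw [Int.add_mul_emod_self_right, Int.emod_eq_of_lt (by omega) (by omega)]
      simp only [mem_coe, mem_filter, mem_Icc, hmod, not_le]
      have hk : (k : ℤ) + 2 ≤ q := by omega
      refine ⟨⟨by positivity, by nlinarith⟩, by nlinarith⟩
    · intro w hw
      simp only [mem_coe, mem_filter, mem_Icc, not_le] at hw
      have hdiv := Int.mul_ediv_add_emod w q
      have := Int.emod_lt_of_pos w hq
      have := Int.emod_nonneg w hq.ne'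
      have := Int.ediv_nonneg hw.1.1 hq.le
      have : w / q < w % q := lt_of_mul_lt_mul_left (by linarith) hq.le
      simp only [mem_coe, mem_sigma, mem_range]
      omega
    · rintro ⟨m, k⟩ hx
      simp only [mem_coe, mem_sigma, mem_range] at hx
      obtain ⟨hk, hm⟩ := (Int.ediv_emod_unique (a := m + k * q) (r := m) (q := k) hq).mpr
        ⟨by ring, by omega, by omega⟩
      simp only [hk, hm, Int.toNat_natCast]
    · intro w hw
      simp only [mem_coe, mem_filter, mem_Icc] at hw
      have hdiv := Int.mul_ediv_add_emod w q
      simp only [Int.toNat_of_nonneg (Int.emod_nonneg w hq.ne'),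
        Int.toNat_of_nonneg (Int.ediv_nonneg hw.1.1 hq.le)]
      linarith
  rw [← hcard, card_sigma]
  simp only [card_range]
  have := sum_range_id_mul_two q
  zify [show 1 ≤ q by omega] at this
  push_cast
  linarith

lemma two_mul_card_semigroupUpTo {q N : ℤ} (hq : 0 < q) (hN : q ^ 2 - q ≤ N + 1) :
    2 * (#(semigroupUpTo q N) : ℤ) = 2 * (N + 1) - q * (q - 1) := by
  have hsplit := card_filter_add_card_filter_not (s := Icc 0 N) fun w => (q + 1) * (w % q) ≤ w
  rw [Int.card_Icc] at hsplit
  have hgaps := two_mul_card_gaps hq hN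
  have : 0 ≤ q ^ 2 - q := by nlinarith
  rw [semigroupUpTo]
  omega

/-- For u ≥ q³+q², the sum over a = 0, 1, 2, ... of #Ψ_a(u) equals
    (−q²+q+2)/2 + ⌊u/q⌋. -/
theorem stmt_6 (q u : ℤ) (hq : 2 ≤ q) (hu : q ^ 3 + q ^ 2 ≤ u) :
    ((∑' a : ℕ, (PsiA q (a : ℤ) u).ncard : ℕ) : ℤ)
      = (-q ^ 2 + q + 2) / 2 + u / q := by
  have hq0 : 0 < q := by omega
  have hu0 : 0 ≤ u := le_trans (by positivity) hu
  have hA : u / q < (u.toNat + 1 : ℕ) := by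
    have := Int.ediv_le_self q hu0
    omega
  have hvanish : ∀ a ∉ range (u.toNat + 1), (PsiA q a u).ncard = 0 := fun a ha => by
    rw [mem_range, not_lt] at ha
    have hau : (a : ℤ) ≤ (q ^ 3 + q ^ 2) * a := le_mul_of_one_le_left (by positivity) (by nlinarith)
    rw [psiA_eq_empty hq0 (by omega), Set.ncard_empty]
  have hN : q ^ 2 - q ≤ u / q + 1 := by
    have : q ^ 2 ≤ u / q := (Int.le_ediv_iff_mul_le hq0).mpr (by nlinarith)
    nlinarith
  rw [tsum_eq_sum hvanish, ← card_psiTriples hq0, card_psiTriples_eq hq0 hA]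
  have := two_mul_card_semigroupUpTo hq0 hN
  have : q * (q - 1) = q ^ 2 - q := by ring
  omega
end

section
/- Let q ≥ 2 and t ≥ 0 be integers. For 0 ≤ b ≤ q−1 define Φ_b = {(i,j) ∈ ℤ² : 0 ≤ i < q²+q, −t − (q+1)b ≤ qi + (q²+q)j < 0}. Then the sum over b = 0, ..., q−1 of #Φ_b equals q²(q−1)/2 + qt. -/
/-!
Since `q i + (q² + q) j = q (i + (q + 1) j)`, the set `Φ_b` is counted by the values
`w = i + (q + 1) j` with `-⌊(t + (q + 1) b) / q⌋ ≤ w < 0`, each attained by exactly `q` pairs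
(one for each `i ∈ [0, q² + q)` with `i ≡ w mod q + 1`). Hence `#Φ_b = q (⌊(t + b) / q⌋ + b)`, and
summing over `b` with Hermite's identity `∑_{b<q} ⌊(t + b) / q⌋ = t` and Gauss's sum gives the result.
-/

open Finset

namespace Int

def edivAddMulEquiv (m : ℤ) (hm : 0 < m) : ℤ × ℤ ≃ ℤ × ℤ where
  toFun p := (p.1 / m, p.1 + m * p.2)
  invFun p := (m * p.1 + p.2 % m, p.2 / m - p.1)
  left_inv := fun ⟨i, j⟩ => by
    simp only [add_mul_emod_self_left, mul_ediv_add_emod, add_mul_ediv_left _ _ hm.ne',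
      add_sub_cancel_left]
  right_inv := fun ⟨a, w⟩ => by
    have hw : w % m / m = 0 := ediv_eq_zero_of_lt (emod_nonneg w hm.ne') (emod_lt_of_pos w hm)
    ext
    · simp only [add_comm (m * a), add_mul_ediv_left _ _ hm.ne', hw, zero_add]
    · linear_combination mul_ediv_add_emod w m

theorem ncard_strip (m n a b : ℤ) (hm : 0 < m) :
    {p : ℤ × ℤ | 0 ≤ p.1 ∧ p.1 < n * m ∧ a ≤ p.1 + m * p.2 ∧ p.1 + m * p.2 < b}.ncard
      = n.toNat * (b - a).toNat := by
  have hset : {p : ℤ × ℤ | 0 ≤ p.1 ∧ p.1 < n * m ∧ a ≤ p.1 + m * p.2 ∧ p.1 + m * p.2 < b}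
      = edivAddMulEquiv m hm ⁻¹' ↑(Ico 0 n ×ˢ Ico a b) := by
    ext ⟨i, j⟩
    simp [edivAddMulEquiv, ediv_nonneg_iff_of_pos hm, Int.ediv_lt_iff_lt_mul hm, and_assoc]
  rw [hset, ← Equiv.image_symm_eq_preimage, Set.ncard_image_of_injective _ (Equiv.injective _),
    Set.ncard_coe_finset, card_product, card_Ico, card_Ico, sub_zero]

/-- Hermite's identity. -/
theorem sum_range_add_ediv_s7 (n : ℕ) (hn : 0 < n) (t : ℤ) :
    ∑ b ∈ Finset.range n, (t + b) / n = t := by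
  have hstep (s : ℤ) : ∑ b ∈ Finset.range n, (s + 1 + b) / n
      = ∑ b ∈ Finset.range n, (s + b) / n + 1 := by
    have hn' : (n : ℤ) ≠ 0 := by positivity
    have hlast : (s + n) / n = s / n + 1 := by simpa using add_mul_ediv_right s 1 hn'
    have h := sum_range_succ' (fun b : ℕ => (s + b) / n) n
    rw [sum_range_succ, hlast] at h
    push_cast at h
    simp only [add_zero, ← add_assoc, add_right_comm s _ (1 : ℤ)] at h
    linarith
  induction t using Int.induction_on with
  | zero =>
    exact sum_eq_zero fun b hb => ediv_eq_zero_of_lt (by positivity) (by simpa using hb)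
  | succ k ih => rw [hstep, ih]
  | pred k ih =>
    have h := hstep (-k - 1)
    rw [sub_add_cancel, ih] at h
    linarith

end Int

theorem ncard_Phi (q a : ℤ) (hq : 0 < q) :
    {p : ℤ × ℤ | 0 ≤ p.1 ∧ p.1 < q ^ 2 + q ∧
        a ≤ q * p.1 + (q ^ 2 + q) * p.2 ∧ q * p.1 + (q ^ 2 + q) * p.2 < 0}.ncard
      = q.toNat * (-a / q).toNat := by
  convert Int.ncard_strip (q + 1) q (-(-a / q)) 0 (by omega) using 2
  · ext ⟨i, j⟩
    have hfac : q * i + (q ^ 2 + q) * j = q * (i + (q + 1) * j) := by ring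
    have hlow : a ≤ q * (i + (q + 1) * j) ↔ -(-a / q) ≤ i + (q + 1) * j := by
      rw [neg_le, Int.le_ediv_iff_mul_le hq]
      constructor <;> intro h <;> linarith
    have hneg : q * (i + (q + 1) * j) < 0 ↔ i + (q + 1) * j < 0 :=
      ⟨fun h => neg_of_mul_neg_right h hq.le, mul_neg_of_pos_of_neg hq⟩
    simp only [Set.mem_ofPred_eq, hfac, hlow, hneg, show q * (q + 1) = q ^ 2 + q by ring]
  · rw [zero_sub, neg_neg]

theorem Finset.sum_range_natCast_mul_two {R : Type*} [CommRing R] (n : ℕ) :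
    (∑ i ∈ range n, (i : R)) * 2 = n * (n - 1) := by
  induction n with
  | zero => simp
  | succ k ih =>
    rw [sum_range_succ, add_mul, ih]
    push_cast
    ring

/-- For q ≥ 2 and t ≥ 0, with Φ_b = {(i,j) : 0 ≤ i < q²+q, −t−(q+1)b ≤ qi+(q²+q)j < 0},
    ∑_{b=0}^{q-1} #Φ_b = q²(q−1)/2 + qt. -/
theorem stmt_7 (q t : ℤ) (hq : 2 ≤ q) (ht : 0 ≤ t) :
    ((∑ b ∈ Finset.range q.toNat,
        ({p : ℤ × ℤ | 0 ≤ p.1 ∧ p.1 < q ^ 2 + q ∧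
            -t - (q + 1) * (b : ℤ) ≤ q * p.1 + (q ^ 2 + q) * p.2 ∧
            q * p.1 + (q ^ 2 + q) * p.2 < 0}).ncard : ℕ) : ℤ)
      = q ^ 2 * (q - 1) / 2 + q * t := by
  lift q to ℕ using (by omega)
  have hq0 : 0 < q := by omega
  have hcard (b : ℕ) : (({p : ℤ × ℤ | 0 ≤ p.1 ∧ p.1 < q ^ 2 + q ∧
      -t - (q + 1) * (b : ℤ) ≤ q * p.1 + (q ^ 2 + q) * p.2 ∧
      q * p.1 + (q ^ 2 + q) * p.2 < 0}).ncard : ℤ) = q * ((t + b) / q) + q * b := by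
    rw [ncard_Phi _ _ (by omega), show -(-t - (q + 1) * b) = t + b + b * q by ring,
      Int.add_mul_ediv_right _ _ (by omega)]
    push_cast
    rw [Int.toNat_natCast, Int.toNat_of_nonneg (by positivity)]
    ring
  have hgauss : (q : ℤ) ^ 2 * (q - 1) = q * (∑ b ∈ range q, (b : ℤ)) * 2 := by
    linear_combination -(q : ℤ) * sum_range_natCast_mul_two (R := ℤ) q
  rw [Int.toNat_natCast, Nat.cast_sum, sum_congr rfl fun b _ => hcard b, sum_add_distrib,
    ← mul_sum, ← mul_sum, Int.sum_range_add_ediv_s7 q hq0, hgauss, Int.mul_ediv_cancel _ two_ne_zero]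
  ring
end

section
/- Let q ≥ 2 and t₁ ≥ 0 be integers. For 0 ≤ b ≤ q−1 define Γ_b = {(i,j) ∈ ℤ² : 0 ≤ i < q²+q, −t₁ ≤ qi + (q²+q)j + (q+1)b < 0}. Then the sum over b = 0, ..., q−1 of #Γ_b equals q·t₁. -/
/-!
Since `q * i + (q ^ 2 + q) * j = q * (i + (q + 1) * j)`, and `(i, j) ↦ (i / (q + 1), i + (q + 1) * j)`
identifies `{0 ≤ i < q * (q + 1)} × ℤ` with `{0 ≤ k < q} × ℤ`, the count `#Γ_b` is `q` times the
number of `m` with `q * m + (q + 1) * b ∈ [-t₁, 0)`. These values are exactly the `n ∈ [-t₁, 0)`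
with `n ≡ b (mod q)`, so summing over the residues `b` counts every `n ∈ [-t₁, 0)` once.
-/

theorem ncard_setOf_mem_Ico_mul_and_add_mul {k c : ℤ} (hc : 0 < c) (P : ℤ → Prop) :
    {p : ℤ × ℤ | 0 ≤ p.1 ∧ p.1 < k * c ∧ P (p.1 + c * p.2)}.ncard
      = k.toNat * {m | P m}.ncard := by
  have hbij : {p : ℤ × ℤ | 0 ≤ p.1 ∧ p.1 < k * c ∧ P (p.1 + c * p.2)}.ncard
      = (Set.Ico 0 k ×ˢ {m | P m}).ncard := by
    refine Set.ncard_congr (fun p _ => (p.1 / c, p.1 + c * p.2)) ?_ ?_ ?_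
    · rintro ⟨i, j⟩ ⟨hi0, hik, hP⟩
      exact ⟨⟨Int.ediv_nonneg hi0 hc.le, (Int.ediv_lt_iff_lt_mul hc).2 hik⟩, hP⟩
    · rintro ⟨i, j⟩ ⟨i', j'⟩ - - h
      simp only [Prod.mk.injEq] at h ⊢
      obtain ⟨hdiv, hsum⟩ := h
      have hmod : i % c = i' % c := by
        rw [← Int.add_mul_emod_self_left i c j, hsum, Int.add_mul_emod_self_left]
      have hi : i = i' := by
        rw [← Int.mul_ediv_add_emod i c, ← Int.mul_ediv_add_emod i' c, hdiv, hmod]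
      subst hi
      exact ⟨rfl, mul_left_cancel₀ hc.ne' (by linarith)⟩
    · rintro ⟨a, m⟩ ⟨⟨ha0, hak⟩, hP⟩
      have hr0 := Int.emod_nonneg m hc.ne'
      have hrc := Int.emod_lt_of_pos m hc
      refine ⟨(c * a + m % c, m / c - a), ⟨by positivity, by nlinarith, ?_⟩, ?_⟩
      · have hm : c * a + m % c + c * (m / c - a) = m := by
          linear_combination Int.mul_ediv_add_emod m c
        rw [hm]
        exact hP
      · simp only [Prod.mk.injEq]
        constructor
        · rw [add_comm, Int.add_mul_ediv_left _ _ hc.ne', Int.ediv_eq_zero_of_lt hr0 hrc, zero_add]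
        · linear_combination Int.mul_ediv_add_emod m c
  rw [hbij, Set.ncard_prod, ← Finset.coe_Ico, Set.ncard_coe_finset, Int.card_Ico, sub_zero]

theorem ncard_setOf_mul_add {q : ℤ} (hq : q ≠ 0) (e : ℤ) (P : ℤ → Prop) :
    {m | P (q * m + e)}.ncard = {n | P n ∧ n ≡ e [ZMOD q]}.ncard := by
  have himage : (fun m => q * m + e) '' {m | P (q * m + e)} = {n | P n ∧ n ≡ e [ZMOD q]} := by
    ext n
    simp only [Set.mem_image, Set.mem_ofPred_eq]
    constructor
    · rintro ⟨m, hP, rfl⟩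
      exact ⟨hP, by simp [Int.ModEq]⟩
    · rintro ⟨hP, hn⟩
      obtain ⟨m, hm⟩ := Int.modEq_iff_dvd.1 hn.symm
      have hmn : q * m + e = n := by linarith
      exact ⟨m, hmn ▸ hP, hmn⟩
  rw [← himage, Set.ncard_image_of_injective]
  intro m m' h
  exact mul_left_cancel₀ hq (by simpa using h)

theorem ncard_Gamma_eq_mul_card_emod_eq {q t1 : ℤ} (hq : 0 < q) {b : ℕ} (hbq : (b : ℤ) < q) :
    {p : ℤ × ℤ | 0 ≤ p.1 ∧ p.1 < q ^ 2 + q ∧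
        -t1 ≤ q * p.1 + (q ^ 2 + q) * p.2 + (q + 1) * (b : ℤ) ∧
        q * p.1 + (q ^ 2 + q) * p.2 + (q + 1) * (b : ℤ) < 0}.ncard
      = q.toNat * ({n ∈ Finset.Ico (-t1) 0 | (n % q).toNat = b} : Finset ℤ).card := by
  have hres : ∀ n, n ≡ (q + 1) * b [ZMOD q] ↔ (n % q).toNat = b := by
    intro n
    rw [Int.ModEq, add_one_mul, add_comm, Int.add_mul_emod_self_left,
      Int.emod_eq_of_lt (by omega) hbq]
    have := Int.emod_nonneg n hq.ne'
    omega
  calc _ = {p : ℤ × ℤ | 0 ≤ p.1 ∧ p.1 < q * (q + 1) ∧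
          (fun m => q * m + (q + 1) * b ∈ Set.Ico (-t1) 0) (p.1 + (q + 1) * p.2)}.ncard := by
        congr 1
        ext p
        simp only [Set.mem_ofPred_eq, Set.mem_Ico]
        ring_nf
    _ = q.toNat * {m | q * m + (q + 1) * b ∈ Set.Ico (-t1) 0}.ncard :=
        ncard_setOf_mem_Ico_mul_and_add_mul (k := q) (by omega)
          (fun m => q * m + (q + 1) * b ∈ Set.Ico (-t1) 0)
    _ = q.toNat * ({n ∈ Finset.Ico (-t1) 0 | (n % q).toNat = b} : Finset ℤ).card := by
        rw [ncard_setOf_mul_add hq.ne', ← Set.ncard_coe_finset]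
        congr 2 with n
        simp [hres]

/-- For q ≥ 2 and t₁ ≥ 0, with Γ_b = {(i,j) : 0 ≤ i < q²+q, −t₁ ≤ qi+(q²+q)j+(q+1)b < 0},
    ∑_{b=0}^{q-1} #Γ_b = q·t₁. -/
theorem stmt_8 (q t1 : ℤ) (hq : 2 ≤ q) (ht : 0 ≤ t1) :
    ((∑ b ∈ Finset.range q.toNat,
        ({p : ℤ × ℤ | 0 ≤ p.1 ∧ p.1 < q ^ 2 + q ∧
            -t1 ≤ q * p.1 + (q ^ 2 + q) * p.2 + (q + 1) * (b : ℤ) ∧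
            q * p.1 + (q ^ 2 + q) * p.2 + (q + 1) * (b : ℤ) < 0}).ncard : ℕ) : ℤ)
      = q * t1 := by
  have hq0 : 0 < q := by omega
  have hresidue : ∀ n ∈ Finset.Ico (-t1) 0, (n % q).toNat ∈ Finset.range q.toNat := fun n _ =>
    Finset.mem_range.2 (by have := Int.emod_lt_of_pos n hq0; omega)
  rw [Finset.sum_congr rfl fun b hb =>
      ncard_Gamma_eq_mul_card_emod_eq hq0 (by have := Finset.mem_range.1 hb; omega),
    ← Finset.mul_sum, ← Finset.card_eq_sum_card_fiberwise hresidue, Int.card_Ico,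
    sub_neg_eq_add, zero_add, Nat.cast_mul, Int.toNat_of_nonneg hq0.le, Int.toNat_of_nonneg ht]
end

section
/- Let q ≥ 2 and r, s, t, u be integers with 0 ≤ s, t < q+1, r ≥ q³−q and u ≥ q³+q². Define Ω_{r,s,t,u} = {(i,j,k) ∈ ℤ³ : −r ≤ i, −s ≤ i + (q²+q)k < −s + (q²+q), −t ≤ qi + (q²+q)j + (q+1)k < −t + (q²+q), −u ≤ −q²i − (q³−q)j − (q³+q²−q−1)k}. Then #Ω_{r,s,t,u} = #Ω_{q³−q, s, t, q³+q²} + (r − (q³−q)) + (u − (q³+q²)). -/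
/-!
Put `x = i + (q²+q)k`, `y = qi + (q²+q)j + (q+1)k`, let `z` be the last linear form, and let `T`
be the set of points whose `x` and `y` lie in their windows of length `q²+q`. On `T` both `i` and
`z` are bijections onto `ℤ`. For `i`, the windows determine `k` and then `j`. For `z`, a
congruence `z ≡ z' (mod q³+q²)` on `T` forces `x = x'` and `y = y'`, hence `i ≡ i'`; so `i ↦ z`
is a bijection modulo `q³+q²`, and the translation `(-(q³+q²), q²-1, q)`, which fixes `x` and `y`
and moves `z` by `q³+q²`, lifts this to `ℤ`. Since `i + z = -(q-1)(x+y)` is bounded on `T`, every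
point with `i < -(q³-q)` has `z ≥ -(q³+q²)`; so past these corner values each unit by which `r` or
`u` grows adds exactly one point, and the points added for `r` and for `u` are distinct.
-/
/-- The lattice point set Ω_{r,s,t,u}: (i,j,k) with −r ≤ i,
    −s ≤ i+(q²+q)k < −s+(q²+q), −t ≤ qi+(q²+q)j+(q+1)k < −t+(q²+q),
    −u ≤ −q²i−(q³−q)j−(q³+q²−q−1)k. -/
def Omega (q r s t u : ℤ) : Set (ℤ × ℤ × ℤ) :=
  {p | -r ≤ p.1 ∧
       -s ≤ p.1 + (q ^ 2 + q) * p.2.2 ∧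
       p.1 + (q ^ 2 + q) * p.2.2 < -s + (q ^ 2 + q) ∧
       -t ≤ q * p.1 + (q ^ 2 + q) * p.2.1 + (q + 1) * p.2.2 ∧
       q * p.1 + (q ^ 2 + q) * p.2.1 + (q + 1) * p.2.2 < -t + (q ^ 2 + q) ∧
       -u ≤ -q ^ 2 * p.1 - (q ^ 3 - q) * p.2.1 - (q ^ 3 + q ^ 2 - q - 1) * p.2.2}

open Set

lemma Int.abs_sub_lt_of_mem_Ico {a b c d : ℤ} (ha : a ∈ Ico c (c + d)) (hb : b ∈ Ico c (c + d)) :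
    |a - b| < d := by
  rw [abs_sub_lt_iff]
  constructor <;> linarith [ha.1, ha.2, hb.1, hb.2]

lemma Int.eq_zero_of_mem_Ico_of_sub_eq_mul {a b c d m : ℤ} (hd : 0 < d) (ha : a ∈ Ico c (c + d))
    (hb : b ∈ Ico c (c + d)) (h : a - b = d * m) : m = 0 := by
  rw [Int.eq_zero_of_abs_lt_dvd ⟨m, h⟩ (Int.abs_sub_lt_of_mem_Ico ha hb)] at h
  exact (mul_eq_zero.1 h.symm).resolve_left hd.ne'

lemma Int.add_mul_neg_ediv_mem_Ico {d : ℤ} (hd : 0 < d) (n c : ℤ) :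
    n + d * -((n + c) / d) ∈ Ico (-c) (-c + d) := by
  have := Int.mul_ediv_add_emod (n + c) d
  have := Int.emod_nonneg (n + c) hd.ne'
  have := Int.emod_lt_of_pos (n + c) hd
  constructor <;> linarith

lemma Int.ncard_Ico (a b : ℤ) : (Ico a b).ncard = (b - a).toNat := by
  rw [← Finset.coe_Ico, ncard_coe_finset, Int.card_Ico]

lemma Int.surjective_of_dvd_sub {D : ℤ} (hD : 0 < D) {F : ℤ → ℤ}
    (hshift : ∀ i n, F (i - D * n) = F i + D * n) (hmod : ∀ i i', D ∣ F i - F i' → D ∣ i - i') :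
    Function.Surjective F := by
  have hmem : ∀ v, v % D ∈ Ico 0 D := fun v => ⟨Int.emod_nonneg v hD.ne', Int.emod_lt_of_pos v hD⟩
  have hinj : InjOn (fun i => F i % D) (Ico 0 D) := fun i hi i' hi' h => by
    have := Int.eq_zero_of_abs_lt_dvd (hmod i i' (Int.ModEq.dvd h.symm))
      (Int.abs_sub_lt_of_mem_Ico (c := 0) (by simpa using hi) (by simpa using hi'))
    omega
  obtain ⟨-, -, hsurj⟩ :=
    ((finite_Ico 0 D).injOn_iff_bijOn_of_mapsTo fun v _ => hmem (F v)).1 hinj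
  intro w
  obtain ⟨i, -, hi⟩ := hsurj (hmem w)
  obtain ⟨n, hn⟩ := (Int.ModEq.dvd hi : D ∣ w - F i)
  exact ⟨i - D * n, by rw [hshift]; omega⟩

lemma ncard_inter_preimage_of_bijOn {α β : Type*} {T : Set α} {f : α → β} (hf : BijOn f T univ)
    (S : Set β) : (T ∩ f ⁻¹' S).ncard = S.ncard := by
  rw [← (hf.injOn.mono inter_subset_left).ncard_image, image_inter_preimage,
    hf.image_eq, univ_inter]

lemma finite_inter_preimage_of_bijOn {α β : Type*} {T : Set α} {f : α → β} (hf : BijOn f T univ)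
    {S : Set β} (hS : S.Finite) : (T ∩ f ⁻¹' S).Finite := by
  refine Finite.of_finite_image ?_ (hf.injOn.mono inter_subset_left)
  rwa [image_inter_preimage, hf.image_eq, univ_inter]

theorem ncard_sep_le_le_eq_add {α : Type*} {T : Set α} {f g : α → ℤ} (hf : BijOn f T univ)
    (hg : BijOn g T univ) {a b a₀ b₀ C : ℤ} (ha : a ≤ a₀) (hb : b ≤ b₀)
    (hbound : ∀ p ∈ T, f p + g p ≤ C) (hcorner : ∀ p ∈ T, f p < a₀ → b₀ ≤ g p) :
    ({p ∈ T | a ≤ f p ∧ b ≤ g p}.ncard : ℤ)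
      = {p ∈ T | a₀ ≤ f p ∧ b₀ ≤ g p}.ncard + (a₀ - a) + (b₀ - b) := by
  set S₀ := {p ∈ T | a₀ ≤ f p ∧ b₀ ≤ g p}
  have hsplit :
      {p ∈ T | a ≤ f p ∧ b ≤ g p} = (S₀ ∪ T ∩ f ⁻¹' Ico a a₀) ∪ T ∩ g ⁻¹' Ico b b₀ := by
    ext p
    by_cases hp : p ∈ T
    · have := hcorner p hp
      simp only [S₀, mem_union, mem_sep_iff, mem_inter_iff, mem_preimage, mem_Ico, hp, true_and]
      omega
    · simp [S₀, hp]
  have hS₀ : S₀.Finite :=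
    (finite_inter_preimage_of_bijOn hf (finite_Icc a₀ (C - b₀))).subset fun p ⟨hp, h⟩ =>
      ⟨hp, h.1, by linarith [hbound p hp]⟩
  have hA := finite_inter_preimage_of_bijOn hf (finite_Ico a a₀)
  have hB := finite_inter_preimage_of_bijOn hg (finite_Ico b b₀)
  rw [hsplit, ncard_union_eq _ (hS₀.union hA) hB, ncard_union_eq _ hS₀ hA,
    ncard_inter_preimage_of_bijOn hf, ncard_inter_preimage_of_bijOn hg, Int.ncard_Ico,
    Int.ncard_Ico]
  · push_cast
    rw [Int.toNat_of_nonneg (by omega), Int.toNat_of_nonneg (by omega)]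
  · exact disjoint_left.2 fun p h₀ hA => by have := h₀.2.1; have := hA.2.2; omega
  · refine disjoint_left.2 fun p h hB => ?_
    rcases h with h₀ | hA
    · have := h₀.2.2; have := hB.2.2; omega
    · have := hcorner p hA.1 hA.2.2; have := hB.2.2; omega

namespace Omega

def xForm (q : ℤ) (p : ℤ × ℤ × ℤ) : ℤ := p.1 + (q ^ 2 + q) * p.2.2

def yForm (q : ℤ) (p : ℤ × ℤ × ℤ) : ℤ := q * p.1 + (q ^ 2 + q) * p.2.1 + (q + 1) * p.2.2

def zForm (q : ℤ) (p : ℤ × ℤ × ℤ) : ℤ :=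
  -q ^ 2 * p.1 - (q ^ 3 - q) * p.2.1 - (q ^ 3 + q ^ 2 - q - 1) * p.2.2

def window (q s t : ℤ) : Set (ℤ × ℤ × ℤ) :=
  {p | xForm q p ∈ Ico (-s) (-s + (q ^ 2 + q)) ∧ yForm q p ∈ Ico (-t) (-t + (q ^ 2 + q))}

lemma omega_eq_sep (q r s t u : ℤ) :
    Omega q r s t u = {p ∈ window q s t | -r ≤ p.1 ∧ -u ≤ zForm q p} := by
  ext p
  simp only [Omega, window, xForm, yForm, zForm, mem_ofPred_eq, mem_Ico]
  tauto

lemma fst_add_zForm (q : ℤ) (p : ℤ × ℤ × ℤ) :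
    p.1 + zForm q p = -(q - 1) * (xForm q p + yForm q p) := by
  simp only [xForm, yForm, zForm]; ring

lemma eq_zero_of_abs_lt_of_relations {q x y k m N : ℤ} (hq : 0 < q) (hx : |x| < q ^ 2 + q)
    (hy : |y| < q ^ 2 + q) (hz : (q ^ 2 + q) * k - q * x - (q - 1) * y = (q ^ 3 + q ^ 2) * N)
    (hj : y - q * x - (q + 1) * k = (q ^ 2 + q) * m) : x = 0 ∧ y = 0 := by
  -- `y` vanishes modulo `q` and modulo `q + 1`; once `y = 0`, so does `x`.
  have hM : q ^ 2 + q = q * (q + 1) := by ring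
  have hcop : IsCoprime q (q + 1) := ⟨-1, 1, by ring⟩
  have hy0 : y = 0 := by
    refine Int.eq_zero_of_abs_lt_dvd (hM ▸ hcop.mul_dvd ?_ ?_) hy
    · exact ⟨y - (q + 1) * k + x + (q ^ 2 + q) * N, by linear_combination hz⟩
    · exact ⟨y - k - q * m - q * k + q ^ 2 * N, by linear_combination hz - hj⟩
  subst hy0
  have hx1 : x = (q + 1) * k - (q ^ 2 + q) * N :=
    mul_left_cancel₀ hq.ne' (by linear_combination -hz)
  have hk : (q + 1) * k = q ^ 2 * N - q * m :=
    mul_left_cancel₀ (by omega : q + 1 ≠ 0) (by linear_combination -hj - q * hx1)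
  refine ⟨Int.eq_zero_of_abs_lt_dvd (hM ▸ hcop.mul_dvd ?_ ?_) hx, rfl⟩
  · exact ⟨-(m + N), by linear_combination hx1 + hk⟩
  · exact ⟨x + k + q * m, by linear_combination hj⟩

variable {q s t : ℤ}

lemma xForm_eq_and_yForm_eq_of_dvd (hq : 0 < q) {p p' : ℤ × ℤ × ℤ} (hp : p ∈ window q s t)
    (hp' : p' ∈ window q s t) (h : q ^ 3 + q ^ 2 ∣ zForm q p - zForm q p') :
    xForm q p = xForm q p' ∧ yForm q p = yForm q p' := by
  obtain ⟨N, hN⟩ := h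
  have := eq_zero_of_abs_lt_of_relations (k := p.2.2 - p'.2.2)
    (m := p.2.1 - p'.2.1 - q * (p.2.2 - p'.2.2)) hq
    (Int.abs_sub_lt_of_mem_Ico hp.1 hp'.1) (Int.abs_sub_lt_of_mem_Ico hp.2 hp'.2)
    (by rw [← hN]; simp only [xForm, yForm, zForm]; ring) (by simp only [xForm, yForm]; ring)
  omega

lemma fst_add_zForm_eq_of_dvd (hq : 0 < q) {p p' : ℤ × ℤ × ℤ} (hp : p ∈ window q s t)
    (hp' : p' ∈ window q s t) (h : q ^ 3 + q ^ 2 ∣ zForm q p - zForm q p') :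
    p.1 + zForm q p = p'.1 + zForm q p' := by
  obtain ⟨hx, hy⟩ := xForm_eq_and_yForm_eq_of_dvd hq hp hp' h
  rw [fst_add_zForm, fst_add_zForm, hx, hy]

lemma injOn_fst_window (hq : 0 < q) : InjOn Prod.fst (window q s t) := by
  intro p hp p' hp' h
  have hM : 0 < q ^ 2 + q := by positivity
  have hk := Int.eq_zero_of_mem_Ico_of_sub_eq_mul (m := p.2.2 - p'.2.2) hM hp.1 hp'.1
    (by simp only [xForm, h]; ring)
  have hj := Int.eq_zero_of_mem_Ico_of_sub_eq_mul (m := p.2.1 - p'.2.1) hM hp.2 hp'.2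
    (by simp only [yForm, h]; rw [sub_eq_zero.1 hk]; ring)
  exact Prod.ext h (Prod.ext (sub_eq_zero.1 hj) (sub_eq_zero.1 hk))

lemma bijOn_fst_window (hq : 0 < q) : BijOn Prod.fst (window q s t) univ := by
  refine ⟨mapsTo_univ _ _, injOn_fst_window hq, fun i _ => ?_⟩
  have hM : 0 < q ^ 2 + q := by positivity
  set k := -((i + s) / (q ^ 2 + q))
  refine ⟨(i, -((q * i + (q + 1) * k + t) / (q ^ 2 + q)), k),
    ⟨Int.add_mul_neg_ediv_mem_Ico hM i s, ?_⟩, rfl⟩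
  convert Int.add_mul_neg_ediv_mem_Ico hM (q * i + (q + 1) * k) t using 1
  simp only [yForm]
  ring

/-- Translation along the kernel of `(xForm q, yForm q)`. -/
def shift (q n : ℤ) (p : ℤ × ℤ × ℤ) : ℤ × ℤ × ℤ :=
  (p.1 - (q ^ 3 + q ^ 2) * n, p.2.1 + (q ^ 2 - 1) * n, p.2.2 + q * n)

lemma shift_mem_window {p : ℤ × ℤ × ℤ} (n : ℤ) (hp : p ∈ window q s t) :
    shift q n p ∈ window q s t := by
  have hx : xForm q (shift q n p) = xForm q p := by simp only [xForm, shift]; ring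
  have hy : yForm q (shift q n p) = yForm q p := by simp only [yForm, shift]; ring
  exact ⟨hx ▸ hp.1, hy ▸ hp.2⟩

lemma zForm_shift (n : ℤ) (p : ℤ × ℤ × ℤ) :
    zForm q (shift q n p) = zForm q p + (q ^ 3 + q ^ 2) * n := by
  simp only [zForm, shift]; ring

lemma bijOn_zForm_window (hq : 0 < q) : BijOn (zForm q) (window q s t) univ := by
  refine ⟨mapsTo_univ _ _, fun p hp p' hp' h => injOn_fst_window hq hp hp' ?_, ?_⟩
  · have := fst_add_zForm_eq_of_dvd hq hp hp' (by rw [h, sub_self]; exact dvd_zero _)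
    omega
  choose σ hσ hσ₁ using fun i => (bijOn_fst_window (s := s) (t := t) hq).surjOn (mem_univ i)
  have hF : Function.Surjective (zForm q ∘ σ) := by
    refine Int.surjective_of_dvd_sub (D := q ^ 3 + q ^ 2) (by positivity) (fun i n => ?_)
      (fun i i' h => ?_)
    · have : σ (i - (q ^ 3 + q ^ 2) * n) = shift q n (σ i) :=
        injOn_fst_window hq (hσ _) (shift_mem_window n (hσ i)) (by simp only [shift, hσ₁])
      simp only [Function.comp, this, zForm_shift]
    · have := fst_add_zForm_eq_of_dvd hq (hσ i) (hσ i') h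
      rw [hσ₁, hσ₁] at this
      obtain ⟨N, hN⟩ := h
      exact ⟨-N, by simp only [Function.comp] at hN; linarith⟩
  intro w _
  obtain ⟨i, hi⟩ := hF w
  exact ⟨σ i, hσ i, hi⟩

lemma fst_add_zForm_le (hq : 0 < q) {p : ℤ × ℤ × ℤ} (hp : p ∈ window q s t) :
    p.1 + zForm q p ≤ (q - 1) * (s + t) := by
  rw [fst_add_zForm]
  nlinarith [hp.1.1, hp.2.1]

lemma neg_le_zForm_of_fst_lt (hq : 0 < q) (hs : 0 ≤ s) (ht : 0 ≤ t) {p : ℤ × ℤ × ℤ}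
    (hp : p ∈ window q s t) (h : p.1 < -(q ^ 3 - q)) : -(q ^ 3 + q ^ 2) ≤ zForm q p := by
  have := fst_add_zForm q p
  nlinarith [hp.1.2, hp.2.2]

end Omega

theorem stmt_9_general (q r s t u : ℤ) (hq : 2 ≤ q)
    (hs0 : 0 ≤ s) (ht0 : 0 ≤ t)
    (hr : q ^ 3 - q ≤ r) (hu : q ^ 3 + q ^ 2 ≤ u) :
    ((Omega q r s t u).ncard : ℤ)
      = ((Omega q (q ^ 3 - q) s t (q ^ 3 + q ^ 2)).ncard : ℤ)
        + (r - (q ^ 3 - q)) + (u - (q ^ 3 + q ^ 2)) := by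
  have hq₀ : 0 < q := by omega
  rw [Omega.omega_eq_sep, Omega.omega_eq_sep,
    ncard_sep_le_le_eq_add (Omega.bijOn_fst_window hq₀) (Omega.bijOn_zForm_window hq₀)
      (a₀ := -(q ^ 3 - q)) (b₀ := -(q ^ 3 + q ^ 2)) (by omega) (by omega)
      (fun _ hp => Omega.fst_add_zForm_le hq₀ hp)
      (fun _ hp h => Omega.neg_le_zForm_of_fst_lt hq₀ hs0 ht0 hp h)]
  ring

/-- For 0 ≤ s,t < q+1, r ≥ q³−q and u ≥ q³+q²,
    #Ω_{r,s,t,u} = #Ω_{q³−q,s,t,q³+q²} + (r − (q³−q)) + (u − (q³+q²)). -/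
theorem stmt_9 (q r s t u : ℤ) (hq : 2 ≤ q)
    (hs0 : 0 ≤ s) (hs1 : s < q + 1) (ht0 : 0 ≤ t) (ht1 : t < q + 1)
    (hr : q ^ 3 - q ≤ r) (hu : q ^ 3 + q ^ 2 ≤ u) :
    ((Omega q r s t u).ncard : ℤ)
      = ((Omega q (q ^ 3 - q) s t (q ^ 3 + q ^ 2)).ncard : ℤ)
        + (r - (q ^ 3 - q)) + (u - (q ^ 3 + q ^ 2)) :=
  stmt_9_general q r s t u hq hs0 ht0 hr hu
end

section
/- Let q ≥ 2 and r, s, t, u be integers. Define Ω_{r,s,t,u} = {(i,j,k) ∈ ℤ³ : −r ≤ i, −s ≤ i + (q²+q)k < −s + (q²+q), −t ≤ qi + (q²+q)j + (q+1)k < −t + (q²+q), −u ≤ −q²i − (q³−q)j − (q³+q²−q−1)k}. Then #Ω_{r,s,t,u} = #Ω_{u,t,s,r}. -/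
/-! The change of variables `(i, j, k) ↦ (I, J, K)` is an involution of `ℤ³` which exchanges the
linear forms `i` and `−q²i − (q³−q)j − (q³+q²−q−1)k`, and the forms `i + (q²+q)k` and
`qi + (q²+q)j + (q+1)k`. It therefore carries `Ω_{r,s,t,u}` bijectively onto `Ω_{u,t,s,r}`. -/

def omegaSymm (q : ℤ) (p : ℤ × ℤ × ℤ) : ℤ × ℤ × ℤ :=
  (-q ^ 2 * p.1 - (q ^ 3 - q) * p.2.1 - (q ^ 3 + q ^ 2 - q - 1) * p.2.2,
   (q - 1) * p.1 + (q ^ 2 - q - 1) * p.2.1 + (q ^ 2 - 1) * p.2.2,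
   p.1 + q * p.2.1 + q * p.2.2)

theorem omegaSymm_involutive (q : ℤ) : Function.Involutive (omegaSymm q) := by
  rintro ⟨i, j, k⟩
  simp only [omegaSymm, Prod.mk.injEq]
  exact ⟨by ring, by ring, by ring⟩

theorem omegaSymm_mem_Omega {q r s t u : ℤ} {p : ℤ × ℤ × ℤ} (hp : p ∈ Omega q r s t u) :
    omegaSymm q p ∈ Omega q u t s r := by
  obtain ⟨i, j, k⟩ := p
  obtain ⟨hr, hs, hs', ht, ht', hu⟩ := hp
  have swap_st : -q ^ 2 * i - (q ^ 3 - q) * j - (q ^ 3 + q ^ 2 - q - 1) * k +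
      (q ^ 2 + q) * (i + q * j + q * k) = q * i + (q ^ 2 + q) * j + (q + 1) * k := by ring
  have swap_ts : q * (-q ^ 2 * i - (q ^ 3 - q) * j - (q ^ 3 + q ^ 2 - q - 1) * k) +
      (q ^ 2 + q) * ((q - 1) * i + (q ^ 2 - q - 1) * j + (q ^ 2 - 1) * k) +
      (q + 1) * (i + q * j + q * k) = i + (q ^ 2 + q) * k := by ring
  have swap_ur : -q ^ 2 * (-q ^ 2 * i - (q ^ 3 - q) * j - (q ^ 3 + q ^ 2 - q - 1) * k) -
      (q ^ 3 - q) * ((q - 1) * i + (q ^ 2 - q - 1) * j + (q ^ 2 - 1) * k) -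
      (q ^ 3 + q ^ 2 - q - 1) * (i + q * j + q * k) = i := by ring
  simp only [Omega, omegaSymm, Set.mem_ofPred_eq, swap_st, swap_ts, swap_ur]
  exact ⟨hu, ht, ht', hs, hs', hr⟩

theorem image_omegaSymm_Omega (q r s t u : ℤ) :
    omegaSymm q '' Omega q r s t u = Omega q u t s r :=
  (Set.image_subset_iff.2 fun _ ↦ omegaSymm_mem_Omega).antisymm fun p hp ↦
    ⟨omegaSymm q p, omegaSymm_mem_Omega hp, omegaSymm_involutive q p⟩

theorem stmt_10_general (q r s t u : ℤ) :
    (Omega q r s t u).ncard = (Omega q u t s r).ncard := by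
  rw [← image_omegaSymm_Omega, Set.ncard_image_of_injective _ (omegaSymm_involutive q).injective]

/-- The lattice point set Ω is symmetric: #Ω_{r,s,t,u} = #Ω_{u,t,s,r}. -/
theorem stmt_10 (q r s t u : ℤ) (hq : 2 ≤ q) :
    (Omega q r s t u).ncard = (Omega q u t s r).ncard :=
  stmt_10_general q r s t u
end

section
/- Let q ≥ 2 and let r, s, t, u, α, β be integers with t − qs = t̂ + (q+1)α where 0 ≤ t̂ < q+1, and u + q²s − (q+1)α = (q³+q²)β + û, and set r̂ = r − s + (q²+q)α + (q³+q²)β. Define Ω_{r,s,t,u} = {(i,j,k) ∈ ℤ³ : −r ≤ i, −s ≤ i + (q²+q)k < −s + (q²+q), −t ≤ qi + (q²+q)j + (q+1)k < −t + (q²+q), −u ≤ −q²i − (q³−q)j − (q³+q²−q−1)k}. Then #Ω_{r,s,t,u} = #Ω_{r̂,0,t̂,û} and r + (q−1)s + (q−1)t + u = r̂ + (q−1)t̂ + û. -/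
open scoped Pointwise

theorem vadd_Omega (q r s t u a b c : ℤ) :
    (a, b, c) +ᵥ Omega q r s t u =
      Omega q (r - a) (s - a - (q ^ 2 + q) * c) (t - q * a - (q ^ 2 + q) * b - (q + 1) * c)
        (u + q ^ 2 * a + (q ^ 3 - q) * b + (q ^ 3 + q ^ 2 - q - 1) * c) := by
  ext ⟨i, j, k⟩
  simp only [Set.mem_vadd_set_iff_neg_vadd_mem, Prod.neg_mk, vadd_eq_add, Prod.mk_add_mk, Omega,
    Set.mem_ofPred_eq]
  refine and_congr ?_ (and_congr ?_ (and_congr ?_ (and_congr ?_ (and_congr ?_ ?_)))) <;>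
    constructor <;> intro h <;> linarith

theorem stmt_11_general (q r s t u α β that uhat rhat : ℤ)
    (h1 : t - q * s = that + (q + 1) * α)
    (h2 : u + q ^ 2 * s - (q + 1) * α = (q ^ 3 + q ^ 2) * β + uhat)
    (h3 : rhat = r - s + (q ^ 2 + q) * α + (q ^ 3 + q ^ 2) * β) :
    (Omega q r s t u).ncard = (Omega q rhat 0 that uhat).ncard ∧
    r + (q - 1) * s + (q - 1) * t + u = rhat + (q - 1) * that + uhat := by
  have hΩ : Omega q rhat 0 that uhat =
      (s - (q ^ 2 + q) * α - (q ^ 3 + q ^ 2) * β, q * α - (1 - q ^ 2) * β, α + q * β) +ᵥ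
        Omega q r s t u := by
    rw [vadd_Omega]
    congr 1
    · linear_combination h3
    · ring
    · linear_combination -h1
    · linear_combination -h2
  exact ⟨by rw [hΩ, Set.ncard_vadd_set], by linear_combination -h3 + (q - 1) * h1 + h2⟩

/-- Lemma (reduction): if t − qs = t̂ + (q+1)α with 0 ≤ t̂ < q+1,
    u + q²s − (q+1)α = (q³+q²)β + û and r̂ = r − s + (q²+q)α + (q³+q²)β, then
    #Ω_{r,s,t,u} = #Ω_{r̂,0,t̂,û} and
    r + (q−1)s + (q−1)t + u = r̂ + (q−1)t̂ + û. -/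
theorem stmt_11 (q r s t u α β that uhat rhat : ℤ) (hq : 2 ≤ q)
    (hthat0 : 0 ≤ that) (hthat1 : that < q + 1)
    (h1 : t - q * s = that + (q + 1) * α)
    (h2 : u + q ^ 2 * s - (q + 1) * α = (q ^ 3 + q ^ 2) * β + uhat)
    (h3 : rhat = r - s + (q ^ 2 + q) * α + (q ^ 3 + q ^ 2) * β) :
    (Omega q r s t u).ncard = (Omega q rhat 0 that uhat).ncard ∧
    r + (q - 1) * s + (q - 1) * t + u = rhat + (q - 1) * that + uhat :=
  stmt_11_general q r s t u α β that uhat rhat h1 h2 h3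
end

section
/- Let q ≥ 2 and let r, s, t, u be integers. Define Ω_{r,s,t,u} = {(i,j,k) ∈ ℤ³ : −r ≤ i, −s ≤ i + (q²+q)k < −s + (q²+q), −t ≤ qi + (q²+q)j + (q+1)k < −t + (q²+q), −u ≤ −q²i − (q³−q)j − (q³+q²−q−1)k}. Then there exists a constant R depending only on q, s, t, u such that for all r ≥ R, #Ω_{r,s,t,u} = 1 − (q³ − 2q + 1) + r + (q−1)s + (q−1)t + u. -/
open Finset

namespace Int

theorem eq_neg_ediv_iff {m x k : ℤ} (hm : 0 < m) :
    k = -(x / m) ↔ 0 ≤ x + m * k ∧ x + m * k < m := by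
  constructor
  · rintro rfl
    rw [mul_neg, ← sub_eq_add_neg, ← emod_def]
    exact ⟨emod_nonneg x hm.ne', emod_lt_of_pos x hm⟩
  · rintro ⟨h₀, h₁⟩
    have := ((Int.ediv_emod_unique (q := -k) hm).mpr ⟨by ring, h₀, h₁⟩).1
    omega

theorem eq_zero_of_abs_mul_lt {a x : ℤ} (ha : 0 < a) (h : |a * x| < a) : x = 0 := by
  rw [abs_mul, abs_of_pos ha] at h
  exact Int.abs_lt_one_iff.mp (lt_of_mul_lt_mul_left (by simpa using h) ha.le)

theorem eq_of_modEq_of_mem_Ico {m a b x y : ℤ} (hab : b ≤ a + m) (hx : x ∈ Ico a b)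
    (hy : y ∈ Ico a b) (h : x ≡ y [ZMOD m]) : x = y := by
  rw [mem_Ico] at hx hy
  have := Int.eq_zero_of_abs_lt_dvd h.dvd (abs_sub_lt_iff.mpr ⟨by omega, by omega⟩)
  omega

theorem emod_mul_eq_emod_add {m n : ℤ} (hm : 0 < m) (hn : 0 < n) (e : ℤ) :
    e % (m * n) = e % m + m * (e / m % n) := by
  have h₁ := emod_nonneg e hm.ne'
  have h₂ := emod_lt_of_pos e hm
  have h₃ := emod_nonneg (e / m) hn.ne'
  have h₄ := emod_lt_of_pos (e / m) hn
  refine ((Int.ediv_emod_unique (q := e / m / n) (mul_pos hm hn)).mpr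
    ⟨?_, by positivity, by nlinarith⟩).2
  rw [emod_def e m, emod_def (e / m) n]
  ring

theorem two_mul_sum_Ico_zero_id {m : ℤ} (hm : 0 ≤ m) : 2 * ∑ x ∈ Ico 0 m, x = m * (m - 1) := by
  induction m, hm using Int.leInduction with
  | base => simp
  | succ m hm ih =>
    rw [← insert_Ico_right_eq_Ico_add_one hm, sum_insert (by simp), mul_add, ih]
    ring

end Int

theorem two_mul_sum_emod_of_injOn {ι : Type*} {S : Finset ι} {g : ι → ℤ} {m : ℤ} (hm : 0 < m)
    (hS : (#S : ℤ) = m) (hg : ∀ x ∈ S, ∀ y ∈ S, g x ≡ g y [ZMOD m] → x = y) :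
    2 * ∑ x ∈ S, g x % m = m * (m - 1) := by
  have himage : S.image (fun x => g x % m) = Ico 0 m := by
    refine eq_of_subset_of_card_le (fun z hz => ?_) ?_
    · obtain ⟨x, -, rfl⟩ := mem_image.mp hz
      exact mem_Ico.mpr ⟨Int.emod_nonneg _ hm.ne', Int.emod_lt_of_pos _ hm⟩
    · rw [card_image_of_injOn hg, Int.card_Ico]
      omega
  rw [← sum_image (g := fun x => g x % m) (f := fun z => z) hg, himage,
    Int.two_mul_sum_Ico_zero_id hm.le]

theorem sum_Ico_mul_eq_sum_sum {β : Type*} [AddCommMonoid β] (g : ℤ → β) (c : ℤ) {m n : ℤ}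
    (hm : 0 ≤ m) (hn : 0 ≤ n) :
    ∑ x ∈ Ico c (c + n * m), g x = ∑ l ∈ Ico 0 n, ∑ x ∈ Ico c (c + m), g (x + l * m) := by
  induction n, hn using Int.leInduction with
  | base => simp
  | succ n hn ih =>
    rw [← insert_Ico_right_eq_Ico_add_one hn, sum_insert (by simp), ← ih,
      ← Ico_union_Ico_eq_Ico (b := c + n * m) (by nlinarith) (by nlinarith),
      sum_union (Ico_disjoint_Ico_consecutive _ _ _), add_comm, sum_Ico_add',
      show c + m + n * m = c + (n + 1) * m by ring]

theorem two_mul_sum_Ico_emod_of_modEq_iff {g : ℤ → ℤ} {m n : ℤ} (hm : 0 < m) (hn : 0 ≤ n)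
    (hg : ∀ x y, g x ≡ g y [ZMOD m] ↔ x ≡ y [ZMOD m]) (c : ℤ) :
    2 * ∑ x ∈ Ico c (c + n * m), g x % m = n * (m * (m - 1)) := by
  have hblock : 2 * ∑ x ∈ Ico c (c + m), g x % m = m * (m - 1) :=
    two_mul_sum_emod_of_injOn hm (by rw [Int.card_Ico]; omega)
      fun x hx y hy h => Int.eq_of_modEq_of_mem_Ico le_rfl hx hy ((hg x y).mp h)
  have hper (x l : ℤ) : g (x + l * m) % m = g x % m :=
    (hg _ _).mpr (Int.add_mul_emod_self_right x l m)
  rw [sum_Ico_mul_eq_sum_sum _ c hm.le hn, mul_sum]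
  simp only [hper, hblock, sum_const, Int.card_Ico, sub_zero, nsmul_eq_mul, Int.toNat_of_nonneg hn]

theorem two_mul_sum_Ico_sub_mul_emod_mul {m n : ℤ} (hm : 0 < m) (hn : 0 < n) (e : ℤ) :
    2 * ∑ l ∈ Ico 0 n, (e - l * m) % (m * n) = 2 * n * (e % m) + m * (n * (n - 1)) := by
  have hcyc : 2 * ∑ l ∈ Ico 0 n, (e / m - l) % n = n * (n - 1) :=
    two_mul_sum_emod_of_injOn hn (by rw [Int.card_Ico]; omega) fun x hx y hy h =>
      Int.eq_of_modEq_of_mem_Ico (zero_add n).ge hx hy (by simpa using h.sub_left (e / m))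
  have hterm (l : ℤ) : (e - l * m) % (m * n) = e % m + m * ((e / m - l) % n) := by
    rw [Int.emod_mul_eq_emod_add hm hn, sub_eq_add_neg, ← neg_mul, Int.add_mul_emod_self_right,
      Int.add_mul_ediv_right _ _ hm.ne', ← sub_eq_add_neg]
  simp only [hterm, sum_add_distrib, sum_const, Int.card_Ico, sub_zero, nsmul_eq_mul,
    Int.toNat_of_nonneg hn.le, ← mul_sum]
  linear_combination m * hcyc

theorem setOf_le_eq_image_sigma {f : ℤ → ℤ} {P c u : ℤ} (hP : 0 < P)
    (hper : Function.Periodic (fun i => f i - i) P) :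
    {i | c ≤ i ∧ f i ≤ u} =
      ((Ico c (c + P)).sigma (fun ρ => Icc 0 ((u - f ρ) / P))).image
        (fun p => p.1 + p.2 * P) := by
  have hshift (ρ n : ℤ) : f (ρ + n * P) = f ρ + n * P := by
    have := hper.int_mul n ρ
    rw [Int.cast_id] at this
    linarith
  ext i
  simp only [Set.mem_ofPred_eq, coe_image, coe_sigma, Set.mem_image, Set.mem_sigma_iff, coe_Ico,
    coe_Icc, Set.mem_Ico, Set.mem_Icc, Sigma.exists]
  constructor
  · rintro ⟨hci, hfi⟩
    have hi : c + (i - c) % P + (i - c) / P * P = i := by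
      linarith [Int.mul_ediv_add_emod (i - c) P]
    refine ⟨c + (i - c) % P, (i - c) / P, ⟨⟨?_, ?_⟩, ?_, ?_⟩, hi⟩
    · linarith [Int.emod_nonneg (i - c) hP.ne']
    · linarith [Int.emod_lt_of_pos (i - c) hP]
    · exact Int.ediv_nonneg (by linarith) hP.le
    · rw [Int.le_ediv_iff_mul_le hP]
      have := hshift (c + (i - c) % P) ((i - c) / P)
      rw [hi] at this
      linarith
  · rintro ⟨ρ, n, ⟨⟨hcρ, -⟩, hn₀, hn⟩, rfl⟩
    rw [Int.le_ediv_iff_mul_le hP] at hn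
    exact ⟨by nlinarith, by linarith [hshift ρ n]⟩

-- The class `ρ + Pℤ` contributes `(u - f ρ) / P + 1` points, and the remainders `(u - f ρ) % P`
-- run through `[0, P)` exactly once.
theorem mul_ncard_setOf_le {f : ℤ → ℤ} {P c u : ℤ} (hP : 0 < P)
    (hper : Function.Periodic (fun i => f i - i) P)
    (hinj : ∀ x ∈ Ico c (c + P), ∀ y ∈ Ico c (c + P), f x ≡ f y [ZMOD P] → x = y)
    (hle : ∀ ρ ∈ Ico c (c + P), f ρ ≤ u) :
    P * {i | c ≤ i ∧ f i ≤ u}.ncard = P * (u - c + 1) - ∑ ρ ∈ Ico c (c + P), (f ρ - ρ) := by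
  have hW : (#(Ico c (c + P)) : ℤ) = P := by rw [Int.card_Ico]; omega
  have hinjOn : Set.InjOn (fun p : (_ : ℤ) × ℤ => p.1 + p.2 * P)
      ((Ico c (c + P)).sigma (fun ρ => Icc 0 ((u - f ρ) / P))) := by
    rintro ⟨ρ, n⟩ h ⟨ρ', n'⟩ h' heq
    simp only [coe_sigma, Set.mem_sigma_iff, mem_coe] at h h' heq
    have hρ : ρ = ρ' := Int.eq_of_modEq_of_mem_Ico le_rfl h.1 h'.1 (by
      rw [Int.modEq_iff_dvd]; exact ⟨n - n', by linarith⟩)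
    subst hρ
    rw [mul_right_cancel₀ hP.ne' (show n * P = n' * P by linarith)]
  have hcard : ({i | c ≤ i ∧ f i ≤ u}.ncard : ℤ) = ∑ ρ ∈ Ico c (c + P), ((u - f ρ) / P + 1) := by
    rw [setOf_le_eq_image_sigma hP hper, Set.ncard_coe_finset, card_image_of_injOn hinjOn,
      card_sigma, Nat.cast_sum]
    refine sum_congr rfl fun ρ hρ => ?_
    have := Int.ediv_nonneg (sub_nonneg.mpr (hle ρ hρ)) hP.le
    rw [Int.card_Icc]
    omega
  have hmod : 2 * ∑ ρ ∈ Ico c (c + P), (u - f ρ) % P = P * (P - 1) :=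
    two_mul_sum_emod_of_injOn hP hW fun x hx y hy h => hinj x hx y hy (by simpa using h.sub_left u)
  have hid : 2 * ∑ ρ ∈ Ico c (c + P), ρ = P * (2 * c + P - 1) := by
    have hshift := sum_Ico_add' (fun x : ℤ => x) 0 P c
    rw [zero_add, add_comm P c] at hshift
    rw [← hshift, sum_add_distrib, mul_add,
      Int.two_mul_sum_Ico_zero_id hP.le, sum_const, Int.card_Ico, sub_zero, nsmul_eq_mul,
      Int.toNat_of_nonneg hP.le]
    ring
  have hexp : P * ∑ ρ ∈ Ico c (c + P), ((u - f ρ) / P + 1)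
      = ∑ ρ ∈ Ico c (c + P), (u - f ρ - (u - f ρ) % P + P) := by
    rw [mul_sum]
    refine sum_congr rfl fun ρ _ => ?_
    rw [Int.emod_def]
    ring
  apply mul_left_cancel₀ (two_ne_zero (α := ℤ))
  rw [hcard, hexp]
  simp only [sum_add_distrib, sum_sub_distrib, sum_const, nsmul_eq_mul, hW]
  linear_combination -hid - hmod

namespace Omega

def kOf (q s i : ℤ) : ℤ := -((i + s) / (q ^ 2 + q))

def jOf (q s t i : ℤ) : ℤ := -((q * i + (q + 1) * kOf q s i + t) / (q ^ 2 + q))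

def weight (q s t i : ℤ) : ℤ :=
  q ^ 2 * i + (q ^ 3 - q) * jOf q s t i + (q ^ 3 + q ^ 2 - q - 1) * kOf q s i

variable {q : ℤ} (s t : ℤ)

theorem eq_kOf_iff (hq : 0 < q) {i k : ℤ} :
    k = kOf q s i ↔ -s ≤ i + (q ^ 2 + q) * k ∧ i + (q ^ 2 + q) * k < -s + (q ^ 2 + q) := by
  rw [kOf, Int.eq_neg_ediv_iff (by positivity)]
  constructor <;> rintro ⟨h₁, h₂⟩ <;> constructor <;> linarith

theorem eq_jOf_iff (hq : 0 < q) {i j : ℤ} :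
    j = jOf q s t i ↔ -t ≤ q * i + (q ^ 2 + q) * j + (q + 1) * kOf q s i ∧
      q * i + (q ^ 2 + q) * j + (q + 1) * kOf q s i < -t + (q ^ 2 + q) := by
  rw [jOf, Int.eq_neg_ediv_iff (by positivity)]
  constructor <;> rintro ⟨h₁, h₂⟩ <;> constructor <;> linarith

theorem eq_image (hq : 0 < q) (r u : ℤ) :
    Omega q r s t u =
      (fun i => (i, jOf q s t i, kOf q s i)) '' {i | -r ≤ i ∧ weight q s t i ≤ u} := by
  ext ⟨i, j, k⟩
  simp only [Omega, weight, Set.mem_ofPred_eq, Set.mem_image, Prod.mk.injEq]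
  constructor
  · rintro ⟨hr, hk₁, hk₂, hj₁, hj₂, hu⟩
    obtain rfl := (eq_kOf_iff s hq).mpr ⟨hk₁, hk₂⟩
    obtain rfl := (eq_jOf_iff s t hq).mpr ⟨hj₁, hj₂⟩
    exact ⟨i, ⟨hr, by linarith⟩, rfl, rfl, rfl⟩
  · rintro ⟨i, ⟨hr, hu⟩, rfl, rfl, rfl⟩
    obtain ⟨hk₁, hk₂⟩ := (eq_kOf_iff s hq).mp rfl
    obtain ⟨hj₁, hj₂⟩ := (eq_jOf_iff s t hq).mp rfl
    exact ⟨hr, hk₁, hk₂, hj₁, hj₂, by linarith⟩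

theorem weight_eq (i : ℤ) :
    weight q s t i = i + (q - 1) * ((i + s) % (q ^ 2 + q) +
      (q * i + (q + 1) * kOf q s i + t) % (q ^ 2 + q) - s - t) := by
  rw [Int.emod_def, Int.emod_def, weight, jOf]
  unfold kOf
  ring

theorem kOf_add_mul (hq : 0 < q) (i l : ℤ) : kOf q s (i + l * (q ^ 2 + q)) = kOf q s i - l := by
  rw [kOf, kOf, show i + l * (q ^ 2 + q) + s = i + s + l * (q ^ 2 + q) by ring,
    Int.add_mul_ediv_right _ _ (by positivity)]
  ring

theorem weight_sub_periodic (hq : 0 < q) :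
    Function.Periodic (fun i => weight q s t i - i) (q ^ 3 + q ^ 2) := by
  intro i
  have hk := kOf_add_mul s hq i q
  rw [show i + q * (q ^ 2 + q) = i + (q ^ 3 + q ^ 2) by ring] at hk
  have hA : (i + (q ^ 3 + q ^ 2) + s) % (q ^ 2 + q) = (i + s) % (q ^ 2 + q) := by
    rw [show i + (q ^ 3 + q ^ 2) + s = i + s + q * (q ^ 2 + q) by ring, Int.add_mul_emod_self_right]
  have hB : (q * (i + (q ^ 3 + q ^ 2)) + (q + 1) * kOf q s (i + (q ^ 3 + q ^ 2)) + t) % (q ^ 2 + q)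
      = (q * i + (q + 1) * kOf q s i + t) % (q ^ 2 + q) := by
    rw [hk, show q * (i + (q ^ 3 + q ^ 2)) + (q + 1) * (kOf q s i - q) + t
      = q * i + (q + 1) * kOf q s i + t + (q ^ 2 - 1) * (q ^ 2 + q) by ring,
      Int.add_mul_emod_self_right]
  simp only [weight_eq, hA, hB]
  ring

theorem weight_le (hq : 0 < q) (i : ℤ) :
    weight q s t i ≤ i + (q - 1) * (2 * (q ^ 2 + q - 1) - s - t) := by
  have hM : 0 < q ^ 2 + q := by positivity
  have h₁ := Int.emod_lt_of_pos (i + s) hM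
  have h₂ := Int.emod_lt_of_pos (q * i + (q + 1) * kOf q s i + t) hM
  rw [weight_eq]
  gcongr ?_ + (q - 1) * ?_ <;> linarith

theorem eq_mul_of_weight_sub_eq {d j k n : ℤ} (hq : 0 < q)
    (ha : |d + (q ^ 2 + q) * k| < q ^ 2 + q)
    (hb : |q * d + (q ^ 2 + q) * j + (q + 1) * k| < q ^ 2 + q)
    (hw : q ^ 2 * d + (q ^ 3 - q) * j + (q ^ 3 + q ^ 2 - q - 1) * k = (q ^ 3 + q ^ 2) * n) :
    d = (q ^ 3 + q ^ 2) * n := by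
  have hM : 0 < q ^ 2 + q := by positivity
  -- `q + 1 ∣ d` and `q ∣ k`; the two bounds then force both reduced differences to vanish.
  obtain ⟨D, rfl⟩ : q + 1 ∣ d :=
    ⟨q ^ 2 * n - q * (q - 1) * j - (q ^ 2 - 1) * k - (q - 1) * d, by linear_combination hw⟩
  have hR : q ^ 2 * D + (q ^ 2 - 1) * k + q * (q - 1) * j = q ^ 2 * n :=
    mul_left_cancel₀ (by positivity : q + 1 ≠ 0) (by linear_combination hw)
  obtain ⟨K, rfl⟩ : q ∣ k := ⟨q * k - q * n + q * D + (q - 1) * j, by linear_combination -hR⟩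
  have hR' : q * D + (q ^ 2 - 1) * K + (q - 1) * j = q * n :=
    mul_left_cancel₀ hq.ne' (by linear_combination hR)
  have hj : D + j + K = 0 := Int.eq_zero_of_abs_mul_lt hM (by convert hb using 2; ring)
  have hK : n + K = 0 := Int.eq_zero_of_abs_mul_lt hM (by
    convert ha using 2
    linear_combination (-(q + 1)) * hR' + (q + 1) * (q - 1) * hj)
  linear_combination (q + 1) * hR' - (q + 1) * (q - 1) * hj - (q + 1) * (q ^ 2 - q) * hK

theorem modEq_of_weight_modEq (hq : 0 < q) {x y : ℤ}
    (h : weight q s t x ≡ weight q s t y [ZMOD q ^ 3 + q ^ 2]) : x ≡ y [ZMOD q ^ 3 + q ^ 2] := by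
  obtain ⟨n, hn⟩ := h.dvd
  obtain ⟨hkx₁, hkx₂⟩ := (eq_kOf_iff s hq (i := x)).mp rfl
  obtain ⟨hky₁, hky₂⟩ := (eq_kOf_iff s hq (i := y)).mp rfl
  obtain ⟨hjx₁, hjx₂⟩ := (eq_jOf_iff s t hq (i := x)).mp rfl
  obtain ⟨hjy₁, hjy₂⟩ := (eq_jOf_iff s t hq (i := y)).mp rfl
  refine (Int.modEq_iff_dvd.mpr ⟨n, eq_mul_of_weight_sub_eq hq
    (j := jOf q s t y - jOf q s t x) (k := kOf q s y - kOf q s x) ?_ ?_ ?_⟩)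
  · rw [abs_lt]; constructor <;> linarith
  · rw [abs_lt]; constructor <;> linarith
  · rw [weight, weight] at hn
    linear_combination hn

theorem two_mul_sum_kOf_residue (hq : 0 < q) (c : ℤ) :
    2 * ∑ ρ ∈ Ico c (c + (q ^ 3 + q ^ 2)), (ρ + s) % (q ^ 2 + q)
      = (q ^ 3 + q ^ 2) * (q ^ 2 + q - 1) := by
  rw [show c + (q ^ 3 + q ^ 2) = c + q * (q ^ 2 + q) by ring,
    two_mul_sum_Ico_emod_of_modEq_iff (by positivity) hq.le
      (fun x y => ⟨Int.ModEq.add_right_cancel' s, Int.ModEq.add_right s⟩)]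
  ring

theorem two_mul_sum_jOf_residue (hq : 0 < q) (c : ℤ) :
    2 * ∑ ρ ∈ Ico c (c + (q ^ 3 + q ^ 2)), (q * ρ + (q + 1) * kOf q s ρ + t) % (q ^ 2 + q)
      = (q ^ 3 + q ^ 2) * (q ^ 2 + q - 1) := by
  have hM : 0 < q ^ 2 + q := by positivity
  -- Shifting `x` by `q² + q` lowers the numerator by `q + 1` modulo `q² + q`, so the `q` shifts
  -- of `x` run once through the residues congruent to `t - x` modulo `q + 1`.
  have hblock (x : ℤ) :
      2 * ∑ l ∈ Ico 0 q, (q * (x + l * (q ^ 2 + q)) + (q + 1) * kOf q s (x + l * (q ^ 2 + q)) + t)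
        % (q ^ 2 + q) = 2 * q * ((t - x) % (q + 1)) + (q + 1) * (q * (q - 1)) := by
    have hshift (l : ℤ) :
        (q * (x + l * (q ^ 2 + q)) + (q + 1) * kOf q s (x + l * (q ^ 2 + q)) + t) % (q ^ 2 + q)
          = (q * x + (q + 1) * kOf q s x + t - l * (q + 1)) % ((q + 1) * q) := by
      rw [kOf_add_mul s hq, show (q + 1) * q = q ^ 2 + q by ring,
        show q * (x + l * (q ^ 2 + q)) + (q + 1) * (kOf q s x - l) + t
          = q * x + (q + 1) * kOf q s x + t - l * (q + 1) + (q * l) * (q ^ 2 + q) by ring,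
        Int.add_mul_emod_self_right]
    have hres : (q * x + (q + 1) * kOf q s x + t) % (q + 1) = (t - x) % (q + 1) := by
      rw [show q * x + (q + 1) * kOf q s x + t = t - x + (x + kOf q s x) * (q + 1) by ring,
        Int.add_mul_emod_self_right]
    simp only [hshift]
    rw [two_mul_sum_Ico_sub_mul_emod_mul (by omega) hq, hres]
  have hres_sum : 2 * ∑ x ∈ Ico c (c + (q ^ 2 + q)), (t - x) % (q + 1) = q * ((q + 1) * q) := by
    rw [show c + (q ^ 2 + q) = c + q * (q + 1) by ring,
      two_mul_sum_Ico_emod_of_modEq_iff (by omega) hq.le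
        (fun x y => ⟨fun h => by simpa using h.sub_left t, Int.ModEq.sub_left t⟩)]
    ring
  rw [show c + (q ^ 3 + q ^ 2) = c + q * (q ^ 2 + q) by ring,
    sum_Ico_mul_eq_sum_sum _ c hM.le hq.le, sum_comm, mul_sum]
  simp only [hblock, sum_add_distrib, sum_const, Int.card_Ico, nsmul_eq_mul, ← mul_sum]
  rw [show c + (q ^ 2 + q) - c = q ^ 2 + q by ring, Int.toNat_of_nonneg hM.le]
  linear_combination q * hres_sum

theorem sum_weight_sub_self (hq : 0 < q) (c : ℤ) :
    ∑ ρ ∈ Ico c (c + (q ^ 3 + q ^ 2)), (weight q s t ρ - ρ)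
      = (q ^ 3 + q ^ 2) * ((q ^ 3 - 2 * q + 1) - (q - 1) * (s + t)) := by
  have hA := two_mul_sum_kOf_residue s hq c
  have hB := two_mul_sum_jOf_residue s t hq c
  have hP : 0 ≤ q ^ 3 + q ^ 2 := by positivity
  apply mul_left_cancel₀ (two_ne_zero (α := ℤ))
  simp only [weight_eq, add_sub_cancel_left, ← mul_sum, sum_sub_distrib, sum_add_distrib,
    sum_const, Int.card_Ico, nsmul_eq_mul]
  rw [Int.toNat_of_nonneg hP]
  linear_combination (q - 1) * (hA + hB)

end Omega

/-- There is a constant R (depending on q, s, t, u) such that for all r ≥ R,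
    #Ω_{r,s,t,u} = 1 − g + r + (q−1)s + (q−1)t + u, where g = q³−2q+1. -/
theorem stmt_13 (q s t u : ℤ) (hq : 2 ≤ q) :
    ∃ R : ℤ, ∀ r : ℤ, R ≤ r →
      ((Omega q r s t u).ncard : ℤ)
        = 1 - (q ^ 3 - 2 * q + 1) + r + (q - 1) * s + (q - 1) * t + u := by
  have hq₀ : 0 < q := by omega
  have hP : 0 < q ^ 3 + q ^ 2 := by positivity
  refine ⟨q ^ 3 + q ^ 2 + (q - 1) * (2 * (q ^ 2 + q - 1) - s - t) - u, fun r hr => ?_⟩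
  have hcount := mul_ncard_setOf_le (c := -r) (u := u) hP (Omega.weight_sub_periodic s t hq₀)
    (fun x hx y hy h =>
      Int.eq_of_modEq_of_mem_Ico le_rfl hx hy (Omega.modEq_of_weight_modEq s t hq₀ h))
    (fun ρ hρ => by
      have := Omega.weight_le s t hq₀ ρ
      rw [mem_Ico] at hρ
      linarith)
  rw [Omega.sum_weight_sub_self s t hq₀] at hcount
  rw [Omega.eq_image s t hq₀, Set.ncard_image_of_injective _ fun a b h => congrArg Prod.fst h]
  exact mul_left_cancel₀ hP.ne' (by linear_combination hcount)
end

section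
/- Let q ≥ 2 and suppose (i,j,k) ∈ ℤ³ satisfies: −r ≤ i ≤ −(q³−q+1), −s ≤ i + (q²+q)k < −s + (q²+q), and −t ≤ qi + (q²+q)j + (q+1)k < −t + (q²+q), where 0 ≤ s,t < q+1 and r ≥ q³−q. Then −q²i − (q³−q)j − (q³+q²−q−1)k > (q²+q)(k − q + 1) − (q³+q²), and moreover k ≥ q−1, hence −q²i − (q³−q)j − (q³+q²−q−1)k > −(q³+q²). -/
/-!
Writing `M = i + (q²+q)k` and `N = qi + (q²+q)j + (q+1)k`, the form in question equals
`(q²+q)k - qM - (q-1)N`; the upper bounds `M, N < q²+q` then give the first estimate.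
The lower bound on `M` together with `i ≤ -(q³-q+1)` forces `(q²+q)k > (q²+q)(q-2)`,
whence `k ≥ q-1` by integrality, and the last estimate follows from the first.
-/

theorem fourth_form_eq {R : Type*} [CommRing R] (q i j k : R) :
    -q ^ 2 * i - (q ^ 3 - q) * j - (q ^ 3 + q ^ 2 - q - 1) * k
      = (q ^ 2 + q) * k - q * (i + (q ^ 2 + q) * k)
        - (q - 1) * (q * i + (q ^ 2 + q) * j + (q + 1) * k) := by
  ring

theorem lt_fourth_form {R : Type*} [CommRing R] [LinearOrder R] [IsStrictOrderedRing R]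
    {q i j k : R} (hq : 1 ≤ q)
    (hM : i + (q ^ 2 + q) * k < q ^ 2 + q)
    (hN : q * i + (q ^ 2 + q) * j + (q + 1) * k < q ^ 2 + q) :
    (q ^ 2 + q) * (k - q + 1) - (q ^ 3 + q ^ 2)
      < -q ^ 2 * i - (q ^ 3 - q) * j - (q ^ 3 + q ^ 2 - q - 1) * k := by
  rw [fourth_form_eq]
  have hqM := mul_lt_mul_of_pos_left hM (by linarith : 0 < q)
  have hqN := mul_le_mul_of_nonneg_left hN.le (sub_nonneg.2 hq)
  linear_combination hqM + hqN

theorem sub_one_le_of_neg_le {q i k : ℤ} (hq : 0 < q) (hi : i ≤ -(q ^ 3 - q + 1))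
    (h : -q ≤ i + (q ^ 2 + q) * k) : q - 1 ≤ k := by
  have hlt : (q ^ 2 + q) * (q - 2) < (q ^ 2 + q) * k := by nlinarith
  have := lt_of_mul_lt_mul_left hlt (by positivity)
  omega

theorem stmt_14_general (q s t i j k : ℤ) (hq : 2 ≤ q)
    (hs0 : 0 ≤ s) (hs1 : s < q + 1) (ht0 : 0 ≤ t)
    (h2 : i ≤ -(q ^ 3 - q + 1))
    (h3 : -s ≤ i + (q ^ 2 + q) * k)
    (h4 : i + (q ^ 2 + q) * k < -s + (q ^ 2 + q))
    (h6 : q * i + (q ^ 2 + q) * j + (q + 1) * k < -t + (q ^ 2 + q)) :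
    (q ^ 2 + q) * (k - q + 1) - (q ^ 3 + q ^ 2)
        < -q ^ 2 * i - (q ^ 3 - q) * j - (q ^ 3 + q ^ 2 - q - 1) * k ∧
    q - 1 ≤ k ∧
    -(q ^ 3 + q ^ 2)
        < -q ^ 2 * i - (q ^ 3 - q) * j - (q ^ 3 + q ^ 2 - q - 1) * k := by
  have hM : i + (q ^ 2 + q) * k < q ^ 2 + q := by linarith
  have hN : q * i + (q ^ 2 + q) * j + (q + 1) * k < q ^ 2 + q := by linarith
  have hlow := lt_fourth_form (by linarith) hM hN
  have hk : q - 1 ≤ k := sub_one_le_of_neg_le (by linarith) h2 (by linarith)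
  have hnonneg : 0 ≤ (q ^ 2 + q) * (k - q + 1) := mul_nonneg (by positivity) (by linarith)
  exact ⟨hlow, hk, by linarith⟩

/-- The key estimate: if −r ≤ i ≤ −(q³−q+1) with the second and third defining
    inequalities of Ω_{r,s,t,u} (0 ≤ s,t < q+1, r ≥ q³−q), then
    −q²i − (q³−q)j − (q³+q²−q−1)k > (q²+q)(k−q+1) − (q³+q²), k ≥ q−1, and hence
    −q²i − (q³−q)j − (q³+q²−q−1)k > −(q³+q²). -/
theorem stmt_14 (q r s t i j k : ℤ) (hq : 2 ≤ q)
    (hs0 : 0 ≤ s) (hs1 : s < q + 1) (ht0 : 0 ≤ t) (ht1 : t < q + 1)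
    (hr : q ^ 3 - q ≤ r)
    (h1 : -r ≤ i) (h2 : i ≤ -(q ^ 3 - q + 1))
    (h3 : -s ≤ i + (q ^ 2 + q) * k)
    (h4 : i + (q ^ 2 + q) * k < -s + (q ^ 2 + q))
    (h5 : -t ≤ q * i + (q ^ 2 + q) * j + (q + 1) * k)
    (h6 : q * i + (q ^ 2 + q) * j + (q + 1) * k < -t + (q ^ 2 + q)) :
    (q ^ 2 + q) * (k - q + 1) - (q ^ 3 + q ^ 2)
        < -q ^ 2 * i - (q ^ 3 - q) * j - (q ^ 3 + q ^ 2 - q - 1) * k ∧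
    q - 1 ≤ k ∧
    -(q ^ 3 + q ^ 2)
        < -q ^ 2 * i - (q ^ 3 - q) * j - (q ^ 3 + q ^ 2 - q - 1) * k :=
  stmt_14_general q s t i j k hq hs0 hs1 ht0 h2 h3 h4 h6
end

section
/- Let q ≥ 2 be an integer and define, for integers s₀,…,s_{q−1}, t₀,…,t_{q−1}, the lattice set Ω = {(i, j₁,…,j_{q−1}, k₁,…,k_{q−1}) ∈ ℤ^{2q−1} : −s₀ ≤ i; for each μ = 1,…,q−1, −s_μ ≤ i + (q²+q)k_μ < −s_μ + (q²+q); for each ν = 1,…,q−1, −t_ν ≤ qi + (q²+q)j_ν − (q+1)Σ_{μ=1}^{q−1} k_μ < −t_ν + (q²+q); and −t₀ ≤ −q²i − (q²+q)Σ_{ν=1}^{q−1} j_ν − (q+1)Σ_{μ=1}^{q−1} k_μ}. Then #Ω is invariant under any permutation of (t₀, t₁, …, t_{q−1}). -/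
/-!
Write `D = q² + q` and `K = Σ k_μ`, and adjoin a coordinate `j₀` through the window condition
`-t₀ ≤ q i + D j₀ - (q+1) K < -t₀ + D`, which determines `j₀` uniquely. Since
`-q² i - D Σ j - (q+1) K = q i + D (-i - Σ j) - (q+1) K`, the last condition of `Ω` says that
`-i - Σ_{ν ≥ 1} j_ν` satisfies the lower half of the window, i.e. that `j₀ ≤ -i - Σ_{ν ≥ 1} j_ν`.
So `Ω` is in bijection with the set of points `(i, j₀, …, j_{q-1}, k)` satisfying all `q` window
conditions and `i + Σ_ν j_ν ≤ 0`, which is symmetric under permuting the indices of `t` and `j`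
simultaneously.
-/

/-- The (2q−1)-dimensional lattice point set Ω with parameters
    s = (s₀,…,s_{q−1}) and t = (t₀,…,t_{q−1}), where q = n+1: points
    (i, j₁,…,j_n, k₁,…,k_n) with −s₀ ≤ i; −s_μ ≤ i+(q²+q)k_μ < −s_μ+(q²+q);
    −t_ν ≤ qi+(q²+q)j_ν−(q+1)Σk < −t_ν+(q²+q); and
    −t₀ ≤ −q²i−(q²+q)Σj−(q+1)Σk. -/
def Omega2 (q : ℤ) (n : ℕ) (s t : Fin (n + 1) → ℤ) :
    Set (ℤ × (Fin n → ℤ) × (Fin n → ℤ)) :=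
  {p | -(s 0) ≤ p.1 ∧
       (∀ μ : Fin n, -(s μ.succ) ≤ p.1 + (q ^ 2 + q) * p.2.2 μ ∧
          p.1 + (q ^ 2 + q) * p.2.2 μ < -(s μ.succ) + (q ^ 2 + q)) ∧
       (∀ ν : Fin n,
          -(t ν.succ) ≤ q * p.1 + (q ^ 2 + q) * p.2.1 ν - (q + 1) * ∑ μ, p.2.2 μ ∧
          q * p.1 + (q ^ 2 + q) * p.2.1 ν - (q + 1) * ∑ μ, p.2.2 μ
            < -(t ν.succ) + (q ^ 2 + q)) ∧
       -(t 0) ≤ -q ^ 2 * p.1 - (q ^ 2 + q) * ∑ ν, p.2.1 ν - (q + 1) * ∑ μ, p.2.2 μ}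

def OmegaSym (q : ℤ) (n : ℕ) (s t : Fin (n + 1) → ℤ) :
    Set (ℤ × (Fin (n + 1) → ℤ) × (Fin n → ℤ)) :=
  {p | -(s 0) ≤ p.1 ∧
       (∀ μ : Fin n, -(s μ.succ) ≤ p.1 + (q ^ 2 + q) * p.2.2 μ ∧
          p.1 + (q ^ 2 + q) * p.2.2 μ < -(s μ.succ) + (q ^ 2 + q)) ∧
       (∀ ν : Fin (n + 1),
          -(t ν) ≤ q * p.1 + (q ^ 2 + q) * p.2.1 ν - (q + 1) * ∑ μ, p.2.2 μ ∧
          q * p.1 + (q ^ 2 + q) * p.2.1 ν - (q + 1) * ∑ μ, p.2.2 μ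
            < -(t ν) + (q ^ 2 + q)) ∧
       p.1 + ∑ ν, p.2.1 ν ≤ 0}

theorem Int.le_iff_le_mul_of_le_mul_of_mul_lt {D c m : ℤ} (hD : 0 < D)
    (h₁ : c ≤ D * m) (h₂ : D * m < c + D) (x : ℤ) : m ≤ x ↔ c ≤ D * x := by
  constructor
  · intro h
    nlinarith
  · intro h
    by_contra! hx
    nlinarith

theorem Int.eq_of_le_mul_of_mul_lt {D c m m' : ℤ} (hD : 0 < D)
    (h₁ : c ≤ D * m) (h₂ : D * m < c + D) (h₁' : c ≤ D * m') (h₂' : D * m' < c + D) :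
    m = m' :=
  le_antisymm ((Int.le_iff_le_mul_of_le_mul_of_mul_lt hD h₁ h₂ m').2 h₁')
    ((Int.le_iff_le_mul_of_le_mul_of_mul_lt hD h₁' h₂' m).2 h₁)

theorem Int.exists_le_mul_lt_add {D : ℤ} (hD : 0 < D) (c : ℤ) :
    ∃ m, c ≤ D * m ∧ D * m < c + D := by
  obtain ⟨m, hm, -⟩ := existsUnique_add_zsmul_mem_Ico hD 0 c
  exact ⟨m, by simpa [mul_comm] using hm⟩

section

variable {q : ℤ} {n : ℕ} {s t : Fin (n + 1) → ℤ}

theorem le_neg_sq_mul_sub_iff_add_add_nonpos (hD : 0 < q ^ 2 + q) {t₀ i j₀ J K : ℤ}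
    (h₁ : -t₀ ≤ q * i + (q ^ 2 + q) * j₀ - (q + 1) * K)
    (h₂ : q * i + (q ^ 2 + q) * j₀ - (q + 1) * K < -t₀ + (q ^ 2 + q)) :
    -t₀ ≤ -q ^ 2 * i - (q ^ 2 + q) * J - (q + 1) * K ↔ i + (j₀ + J) ≤ 0 := by
  have key := Int.le_iff_le_mul_of_le_mul_of_mul_lt
    (c := -t₀ - q * i + (q + 1) * K) (m := j₀) hD (by linarith) (by linarith) (-i - J)
  constructor
  · intro h
    linarith [key.2 (by linarith)]
  · intro h
    linarith [key.1 (by linarith)]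

theorem image_tail_omegaSym (hD : 0 < q ^ 2 + q) :
    (fun p => (p.1, Fin.tail p.2.1, p.2.2)) '' OmegaSym q n s t = Omega2 q n s t := by
  ext ⟨i, j, k⟩
  constructor
  · rintro ⟨⟨i, j, k⟩, ⟨h₀, hs, ht, hsum⟩, hp⟩
    cases hp
    refine ⟨h₀, hs, fun ν => ht ν.succ, ?_⟩
    rw [Fin.sum_univ_succ] at hsum
    exact (le_neg_sq_mul_sub_iff_add_add_nonpos hD (ht 0).1 (ht 0).2).2 hsum
  · rintro ⟨h₀, hs, ht, hlast⟩
    obtain ⟨j₀, hj₀⟩ := Int.exists_le_mul_lt_add hD (-t 0 - q * i + (q + 1) * ∑ μ, k μ)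
    have ht₀ : -t 0 ≤ q * i + (q ^ 2 + q) * j₀ - (q + 1) * ∑ μ, k μ ∧
        q * i + (q ^ 2 + q) * j₀ - (q + 1) * ∑ μ, k μ < -t 0 + (q ^ 2 + q) := by
      constructor <;> linarith
    refine ⟨(i, Fin.cons j₀ j, k), ⟨h₀, hs, Fin.cases ht₀ ht, ?_⟩, by simp⟩
    rw [Fin.sum_univ_succ]
    exact (le_neg_sq_mul_sub_iff_add_add_nonpos hD ht₀.1 ht₀.2).1 hlast

theorem injOn_tail_omegaSym (hD : 0 < q ^ 2 + q) :
    Set.InjOn (fun p => (p.1, Fin.tail p.2.1, p.2.2)) (OmegaSym q n s t) := by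
  rintro ⟨i, j, k⟩ ⟨-, -, ht, -⟩ ⟨i', j', k'⟩ ⟨-, -, ht', -⟩ hp
  simp only [Prod.mk.injEq] at hp
  obtain ⟨rfl, htail, rfl⟩ := hp
  have hhead : j 0 = j' 0 := Int.eq_of_le_mul_of_mul_lt hD
    (c := -t 0 - q * i + (q + 1) * ∑ μ, k μ)
    (by linarith [ht 0]) (by linarith [ht 0]) (by linarith [ht' 0]) (by linarith [ht' 0])
  rw [← Fin.cons_self_tail j, ← Fin.cons_self_tail j', hhead, htail]

theorem ncard_omega2 (hD : 0 < q ^ 2 + q) :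
    (Omega2 q n s t).ncard = (OmegaSym q n s t).ncard := by
  rw [← image_tail_omegaSym hD, (injOn_tail_omegaSym hD).ncard_image]

theorem omegaSym_comp_perm (σ : Equiv.Perm (Fin (n + 1))) :
    OmegaSym q n s (t ∘ σ) = (fun p => (p.1, p.2.1 ∘ σ, p.2.2)) '' OmegaSym q n s t := by
  ext ⟨i, j, k⟩
  constructor
  · rintro ⟨h₀, hs, ht, hsum⟩
    refine ⟨(i, j ∘ σ.symm, k), ⟨h₀, hs, fun ν => by simpa using ht (σ.symm ν), ?_⟩,
      by simp [Function.comp_assoc]⟩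
    simpa [Function.comp_def, Equiv.sum_comp] using hsum
  · rintro ⟨⟨i, j, k⟩, ⟨h₀, hs, ht, hsum⟩, hp⟩
    cases hp
    exact ⟨h₀, hs, fun ν => ht (σ ν), by rwa [Function.comp_def, Equiv.sum_comp]⟩

theorem ncard_omegaSym_comp_perm (σ : Equiv.Perm (Fin (n + 1))) :
    (OmegaSym q n s (t ∘ σ)).ncard = (OmegaSym q n s t).ncard :=
  omegaSym_comp_perm σ ▸ Set.ncard_image_of_injective _
    (Function.injective_id.prodMap
      (σ.surjective.injective_comp_right.prodMap Function.injective_id))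

end

theorem stmt_17_general (q : ℤ) (n : ℕ) (hq : 2 ≤ q)
    (s t : Fin (n + 1) → ℤ) (σ : Equiv.Perm (Fin (n + 1))) :
    (Omega2 q n s t).ncard = (Omega2 q n s (t ∘ σ)).ncard := by
  have hD : 0 < q ^ 2 + q := by nlinarith
  rw [ncard_omega2 hD, ncard_omega2 hD, ncard_omegaSym_comp_perm]

/-- #Ω is invariant under any permutation of (t₀, t₁, …, t_{q−1}). -/
theorem stmt_17 (q : ℤ) (n : ℕ) (hq : 2 ≤ q) (hn : (q : ℤ) = n + 1)
    (s t : Fin (n + 1) → ℤ) (σ : Equiv.Perm (Fin (n + 1))) :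
    (Omega2 q n s t).ncard = (Omega2 q n s (t ∘ σ)).ncard :=
  stmt_17_general q n hq s t σ
end

section
/- Let q ≥ 2, r* = q³−q, u* = q³+q². Define Ω' = {(i, j₁,…,j_{q−1}, k₁,…,k_{q−1}) ∈ ℤ^{2q−1} : −r* ≤ i; 0 ≤ i + (q²+q)k_μ < q²+q for all μ; 0 ≤ qi + (q²+q)j_ν − (q+1)Σ_μ k_μ < q²+q for all ν; −u* ≤ −q²i − (q²+q)Σ_ν j_ν − (q+1)Σ_μ k_μ}. Then the constraints force k₁ = ⋯ = k_{q−1} and j₁ = ⋯ = j_{q−1}, and via the substitution j' = j − k this set is in bijection with Ω_{r*,0,0,u*} = {(i,j',k) ∈ ℤ³ : −r* ≤ i, 0 ≤ i + (q²+q)k < q²+q, 0 ≤ qi + (q²+q)j' + (q+1)k < q²+q, −u* ≤ −q²i − (q³−q)j' − (q³+q²−q−1)k}; consequently #Ω' = q + u*. -/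
/-- The (2q−1)-dimensional lattice point set Ω' with all parameters
    s_μ = t_ν = 0, r* = q³−q, u* = q³+q², where q = n+1. -/
def Omega' (q : ℤ) (n : ℕ) : Set (ℤ × (Fin n → ℤ) × (Fin n → ℤ)) :=
  {p | -(q ^ 3 - q) ≤ p.1 ∧
       (∀ μ : Fin n, 0 ≤ p.1 + (q ^ 2 + q) * p.2.2 μ ∧
          p.1 + (q ^ 2 + q) * p.2.2 μ < q ^ 2 + q) ∧
       (∀ ν : Fin n,
          0 ≤ q * p.1 + (q ^ 2 + q) * p.2.1 ν - (q + 1) * ∑ μ, p.2.2 μ ∧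
          q * p.1 + (q ^ 2 + q) * p.2.1 ν - (q + 1) * ∑ μ, p.2.2 μ < q ^ 2 + q) ∧
       -(q ^ 3 + q ^ 2)
         ≤ -q ^ 2 * p.1 - (q ^ 2 + q) * ∑ ν, p.2.1 ν - (q + 1) * ∑ μ, p.2.2 μ}

lemma ediv_eq_neg_of_add_mul_mem_Ico {m c k : ℤ} (hm : 0 < m) (h : c + m * k ∈ Set.Ico 0 m) :
    c / m = -k :=
  ((Int.ediv_emod_unique hm).2 ⟨by ring, h⟩).1

lemma Fin.sum_eq_mul_of_forall_eq {n : ℕ} {F : Fin n → ℤ} (hF : ∀ μ μ', F μ = F μ')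
    (μ₀ : Fin n) : ∑ μ, F μ = n * F μ₀ := by
  rw [Finset.sum_eq_card_nsmul fun μ _ ↦ hF μ μ₀, Finset.card_univ, Fintype.card_fin,
    nsmul_eq_mul]

namespace Omega'

variable {q : ℤ} {n : ℕ} {p : ℤ × (Fin n → ℤ) × (Fin n → ℤ)}

lemma k_eq (hq : 0 < q) (hp : p ∈ Omega' q n) (μ μ' : Fin n) : p.2.2 μ = p.2.2 μ' := by
  have hm : 0 < q ^ 2 + q := by positivity
  exact neg_injective <| (ediv_eq_neg_of_add_mul_mem_Ico hm (hp.2.1 μ)).symm.trans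
    (ediv_eq_neg_of_add_mul_mem_Ico hm (hp.2.1 μ'))

lemma j_eq (hq : 0 < q) (hp : p ∈ Omega' q n) (ν ν' : Fin n) : p.2.1 ν = p.2.1 ν' := by
  have hm : 0 < q ^ 2 + q := by positivity
  have h : ∀ ν, q * p.1 - (q + 1) * ∑ μ, p.2.2 μ + (q ^ 2 + q) * p.2.1 ν ∈
      Set.Ico 0 (q ^ 2 + q) :=
    fun ν ↦ ⟨by linarith [(hp.2.2.1 ν).1], by linarith [(hp.2.2.1 ν).2]⟩
  exact neg_injective <| (ediv_eq_neg_of_add_mul_mem_Ico hm (h ν)).symm.trans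
    (ediv_eq_neg_of_add_mul_mem_Ico hm (h ν'))

lemma bijOn_Omega (hn : q = n + 1) (μ₀ : Fin n) :
    Set.BijOn (fun p : ℤ × (Fin n → ℤ) × (Fin n → ℤ) ↦ (p.1, p.2.1 μ₀ - p.2.2 μ₀, p.2.2 μ₀))
      (Omega' q n) (Omega q (q ^ 3 - q) 0 0 (q ^ 3 + q ^ 2)) := by
  have hq : 0 < q := by omega
  have hn' : (n : ℤ) = q - 1 := by omega
  refine Set.InvOn.bijOn (f' := fun c ↦ (c.1, fun _ ↦ c.2.1 + c.2.2, fun _ ↦ c.2.2))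
    ⟨fun p hp ↦ ?_, fun c _ ↦ ?_⟩ (fun p hp ↦ ?_) fun c hc ↦ ?_
  · exact Prod.ext rfl (Prod.ext (funext fun ν ↦ by simp [j_eq hq hp ν μ₀])
      (funext fun μ ↦ k_eq hq hp μ₀ μ))
  · simp
  · have hK := Fin.sum_eq_mul_of_forall_eq (k_eq hq hp) μ₀
    have hJ := Fin.sum_eq_mul_of_forall_eq (j_eq hq hp) μ₀
    obtain ⟨hi, hk, hj, hs⟩ := hp
    rw [hK, hn'] at hj hs
    rw [hJ, hn'] at hs
    exact ⟨hi, by linarith [(hk μ₀).1], by linarith [(hk μ₀).2], by linarith [(hj μ₀).1],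
      by linarith [(hj μ₀).2], by linarith⟩
  · have hK := Fin.sum_eq_mul_of_forall_eq (F := fun _ ↦ c.2.2) (fun _ _ ↦ rfl) μ₀
    have hJ := Fin.sum_eq_mul_of_forall_eq (F := fun _ ↦ c.2.1 + c.2.2) (fun _ _ ↦ rfl) μ₀
    obtain ⟨hi, hk0, hk1, hj0, hj1, hs⟩ := hc
    refine ⟨hi, fun _ ↦ ⟨by linarith, by linarith⟩, fun _ ↦ ?_, ?_⟩ <;> simp only [hK, hJ, hn']
    · exact ⟨by linarith, by linarith⟩
    · linarith

end Omega'

namespace Omega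

variable {q : ℤ}

/- Coordinates on `Omega q (q ^ 3 - q) 0 0 (q ^ 3 + q ^ 2)`: `d = -k`, and `x, y` are the
base-`(q + 1)` digits of the residue `i + (q ^ 2 + q) * k ∈ [0, q ^ 2 + q)`, so that
`i = (q ^ 2 + q) * d + (q + 1) * x + y`; `j` is then forced. In these coordinates the last
inequality defining the set reads `d ≤ dBound q x y`. -/
def dBound (q x y : ℤ) : ℤ :=
  if x = 0 ∧ y = 0 then q else if q < x + y then y - q - 1 else if y ≤ 0 then 0 else y - 1

lemma dBound_le (hq : 0 < q) {x y : ℤ} (hy : y ≤ q) : dBound q x y ≤ q := by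
  unfold dBound; split_ifs <;> omega

lemma last_constraint_iff_le_dBound (hq : 0 < q) {d x y w : ℤ} (hx0 : 0 ≤ x)
    (hx1 : x ≤ q - 1) (hy0 : 0 ≤ y) (hy1 : y ≤ q) (hd0 : 1 - q ≤ d)
    (hw : q * y - (q + 1) * d + (q ^ 2 + q) * w ∈ Set.Ico 0 (q ^ 2 + q)) :
    (q ^ 2 + q) * x + q ^ 2 * y + (q + 1) * d + (q - 1) * (q ^ 2 + q) * w ≤ q * (q ^ 2 + q) ↔
      d ≤ dBound q x y := by
  obtain ⟨hw0, hw1⟩ := hw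
  have hq1 : 0 ≤ q - 1 := by omega
  -- the left-hand side plus `q - 1` times `hw0` gives `d ≤ q`
  suffices d ≤ q → (_ ↔ d ≤ dBound q x y) from
    ⟨fun h ↦ (this (by nlinarith)).1 h, fun h ↦ (this (h.trans (dBound_le hq hy1))).2 h⟩
  intro hd1
  have hwu : w ≤ 1 := by nlinarith
  have hwl : -1 ≤ w := by nlinarith
  have hqx := mul_le_mul_of_nonneg_left hx1 hq.le
  have hqy := mul_le_mul_of_nonneg_left hy1 hq.le
  interval_cases w <;> unfold dBound <;> split_ifs <;> constructor <;> intro h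
  all_goals first
    | nlinarith [mul_nonneg hq1 hx0, mul_nonneg hq1 hy0]
    | obtain rfl : y = 0 := by omega
      nlinarith [mul_le_mul_of_nonneg_left (by omega : 1 ≤ x) hq.le]

lemma mem_iff_of_coords (hq : 0 < q) {i j k d x y w : ℤ} (hx0 : 0 ≤ x) (hx1 : x ≤ q - 1)
    (hy0 : 0 ≤ y) (hy1 : y ≤ q) (hi : i = (q ^ 2 + q) * d + (q + 1) * x + y)
    (hj : j = -q * d - x + w) (hk : k = -d) :
    (i, j, k) ∈ Omega q (q ^ 3 - q) 0 0 (q ^ 3 + q ^ 2) ↔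
      1 - q ≤ d ∧ q * y - (q + 1) * d + (q ^ 2 + q) * w ∈ Set.Ico 0 (q ^ 2 + q) ∧
        d ≤ dBound q x y := by
  subst hi hj hk
  have hA0 : 0 ≤ (q + 1) * x + y := by nlinarith
  have hA1 : (q + 1) * x + y < q ^ 2 + q := by nlinarith
  have hd0 : -(q ^ 3 - q) ≤ (q ^ 2 + q) * d + (q + 1) * x + y ↔ 1 - q ≤ d := by
    constructor <;> intro h <;> nlinarith
  have hB : q * ((q ^ 2 + q) * d + (q + 1) * x + y) + (q ^ 2 + q) * (-q * d - x + w) +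
      (q + 1) * -d = q * y - (q + 1) * d + (q ^ 2 + q) * w := by ring
  have hL : -q ^ 2 * ((q ^ 2 + q) * d + (q + 1) * x + y) - (q ^ 3 - q) * (-q * d - x + w) -
      (q ^ 3 + q ^ 2 - q - 1) * -d =
      -((q ^ 2 + q) * x + q ^ 2 * y + (q + 1) * d + (q - 1) * (q ^ 2 + q) * w) := by ring
  simp only [Omega, Set.mem_ofPred_eq, Set.mem_Ico, hB, hL, neg_zero, zero_add, hd0]
  constructor
  · rintro ⟨hd, -, -, hw0, hw1, hS⟩
    refine ⟨hd, ⟨hw0, hw1⟩, ?_⟩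
    exact (last_constraint_iff_le_dBound hq hx0 hx1 hy0 hy1 hd ⟨hw0, hw1⟩).1 (by linarith)
  · rintro ⟨hd, hw, hle⟩
    have hS := (last_constraint_iff_le_dBound hq hx0 hx1 hy0 hy1 hd hw).2 hle
    exact ⟨hd, by linarith, by linarith, hw.1, hw.2, by linarith⟩

def ofCoords (q : ℤ) (c : ℤ × ℤ × ℤ) : ℤ × ℤ × ℤ :=
  ((q ^ 2 + q) * c.1 + (q + 1) * c.2.1 + c.2.2,
    -q * c.1 - c.2.1 - (q * c.2.2 - (q + 1) * c.1) / (q ^ 2 + q), -c.1)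

def toCoords (q : ℤ) (p : ℤ × ℤ × ℤ) : ℤ × ℤ × ℤ :=
  (-p.2.2, (p.1 + (q ^ 2 + q) * p.2.2) / (q + 1), (p.1 + (q ^ 2 + q) * p.2.2) % (q + 1))

noncomputable def coordRegion (q : ℤ) : Finset (ℤ × ℤ × ℤ) :=
  (Finset.Icc (1 - q) q ×ˢ Finset.Icc 0 (q - 1) ×ˢ Finset.Icc 0 q).filter
    fun c ↦ c.1 ≤ dBound q c.2.1 c.2.2

lemma mem_coordRegion {d x y : ℤ} :
    (d, x, y) ∈ coordRegion q ↔ (1 - q ≤ d ∧ d ≤ q) ∧ (0 ≤ x ∧ x ≤ q - 1) ∧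
      (0 ≤ y ∧ y ≤ q) ∧ d ≤ dBound q x y := by
  simp only [coordRegion, Finset.mem_filter, Finset.mem_product, Finset.mem_Icc, and_assoc]

lemma ofCoords_mem (hq : 0 < q) {c : ℤ × ℤ × ℤ} (hc : c ∈ coordRegion q) :
    ofCoords q c ∈ Omega q (q ^ 3 - q) 0 0 (q ^ 3 + q ^ 2) := by
  obtain ⟨d, x, y⟩ := c
  obtain ⟨⟨hd0, -⟩, ⟨hx0, hx1⟩, ⟨hy0, hy1⟩, hle⟩ := mem_coordRegion.1 hc
  have hm : 0 < q ^ 2 + q := by positivity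
  refine (mem_iff_of_coords hq hx0 hx1 hy0 hy1 rfl (sub_eq_add_neg _ _) rfl).2 ⟨hd0, ?_, hle⟩
  rw [mul_neg, ← sub_eq_add_neg, ← Int.emod_def]
  exact ⟨Int.emod_nonneg _ hm.ne', Int.emod_lt_of_pos _ hm⟩

lemma toCoords_ofCoords (hq : 0 < q) {c : ℤ × ℤ × ℤ} (hc : c ∈ coordRegion q) :
    toCoords q (ofCoords q c) = c := by
  obtain ⟨d, x, y⟩ := c
  obtain ⟨-, -, ⟨hy0, hy1⟩, -⟩ := mem_coordRegion.1 hc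
  have hA : (q ^ 2 + q) * d + (q + 1) * x + y + (q ^ 2 + q) * -d = y + (q + 1) * x := by ring
  obtain ⟨hx, hy⟩ := (Int.ediv_emod_unique (a := y + (q + 1) * x) (q := x) (r := y)
    (by omega)).2 ⟨rfl, hy0, by omega⟩
  simp only [toCoords, ofCoords, hA, hx, hy, neg_neg]

lemma toCoords_mem_and_ofCoords_toCoords (hq : 0 < q) {p : ℤ × ℤ × ℤ}
    (hp : p ∈ Omega q (q ^ 3 - q) 0 0 (q ^ 3 + q ^ 2)) :
    toCoords q p ∈ coordRegion q ∧ ofCoords q (toCoords q p) = p := by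
  obtain ⟨i, j, k⟩ := p
  have hm : 0 < q ^ 2 + q := by positivity
  have hq1 : 0 < q + 1 := by omega
  set A := i + (q ^ 2 + q) * k
  have hA : (q + 1) * (A / (q + 1)) + A % (q + 1) = A := Int.mul_ediv_add_emod A (q + 1)
  have hy0 : 0 ≤ A % (q + 1) := Int.emod_nonneg _ hq1.ne'
  have hy1 : A % (q + 1) < q + 1 := Int.emod_lt_of_pos _ hq1
  have hx0 : 0 ≤ A / (q + 1) := Int.ediv_nonneg hp.2.1 hq1.le
  have hx1 : A / (q + 1) < q := (Int.ediv_lt_iff_lt_mul hq1).2 (by linarith [hp.2.2.1])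
  obtain ⟨hd0, hw, hle⟩ := (mem_iff_of_coords hq hx0 (by omega) hy0 (by omega)
    (by linarith) (show j = -q * -k - A / (q + 1) + (j - q * k + A / (q + 1)) by ring)
    (neg_neg k).symm).1 hp
  have hc : toCoords q (i, j, k) = (-k, A / (q + 1), A % (q + 1)) := rfl
  rw [hc, mem_coordRegion]
  refine ⟨⟨⟨hd0, hle.trans (dBound_le hq (by omega))⟩, ⟨hx0, by omega⟩, ⟨hy0, by omega⟩, hle⟩,
    ?_⟩
  simp only [ofCoords, ediv_eq_neg_of_add_mul_mem_Ico hm hw]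
  exact Prod.ext (by linarith) (Prod.ext (by ring) (neg_neg k))

lemma bijOn_ofCoords (hq : 0 < q) :
    Set.BijOn (ofCoords q) (coordRegion q) (Omega q (q ^ 3 - q) 0 0 (q ^ 3 + q ^ 2)) :=
  Set.InvOn.bijOn
    ⟨fun _ hc ↦ toCoords_ofCoords hq hc,
      fun _ hp ↦ (toCoords_mem_and_ofCoords_toCoords hq hp).2⟩
    (fun _ hc ↦ ofCoords_mem hq hc) fun _ hp ↦ (toCoords_mem_and_ofCoords_toCoords hq hp).1

noncomputable def boxWithTail (q : ℤ) : Finset (ℤ × ℤ × ℤ) :=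
  Finset.Icc (1 - q) 0 ×ˢ Finset.Icc 0 (q - 1) ×ˢ Finset.Icc 0 q ∪
    Finset.Icc 1 q ×ˢ {0} ×ˢ {0}

lemma mem_boxWithTail {d x y : ℤ} :
    (d, x, y) ∈ boxWithTail q ↔
      (1 - q ≤ d ∧ d ≤ 0) ∧ (0 ≤ x ∧ x ≤ q - 1) ∧ (0 ≤ y ∧ y ≤ q) ∨
        (1 ≤ d ∧ d ≤ q) ∧ x = 0 ∧ y = 0 := by
  simp only [boxWithTail, Finset.mem_union, Finset.mem_product, Finset.mem_Icc,
    Finset.mem_singleton]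

lemma card_boxWithTail (hq : 0 < q) : ((boxWithTail q).card : ℤ) = q ^ 3 + q ^ 2 + q := by
  rw [boxWithTail, Finset.card_union_of_disjoint]
  · simp only [Finset.card_product, Int.card_Icc, Finset.card_singleton, zero_add, sub_zero,
      sub_sub_cancel, sub_add_cancel, add_sub_cancel_right]
    push_cast [Int.toNat_of_nonneg (by omega : 0 ≤ q), Int.toNat_of_nonneg (by omega : 0 ≤ q + 1)]
    ring
  · rw [Finset.disjoint_left]
    rintro ⟨d, x, y⟩ h h'
    simp only [Finset.mem_product, Finset.mem_Icc] at h h'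
    omega

/- The part of `coordRegion q` with `d ≥ 1` other than the tail `x = y = 0` is the set
`1 ≤ d ≤ y - 1`, `x + y ≤ q`; the shear `cutPaste` moves it onto the part of the box
`d ≤ 0` that `coordRegion q` misses, namely `y - q ≤ d`, `x + y > q`. -/
def cutPaste (q : ℤ) : ℤ × ℤ × ℤ → ℤ × ℤ × ℤ
  | (d, x, y) => if d ≤ 0 ∨ x = 0 ∧ y = 0 then (d, x, y) else (d - y + 1, x + y - 1, q + 2 - y)

def pasteCut (q : ℤ) : ℤ × ℤ × ℤ → ℤ × ℤ × ℤ
  | (d, x, y) => if 1 ≤ d ∨ x + y ≤ q ∨ d < y - q then (d, x, y)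
    else (d + q + 1 - y, x + y - q - 1, q + 2 - y)

lemma card_coordRegion : (coordRegion q).card = (boxWithTail q).card := by
  refine Finset.card_bij' (fun c _ ↦ cutPaste q c) (fun c _ ↦ pasteCut q c) ?_ ?_ ?_ ?_
  · rintro ⟨d, x, y⟩ hc
    rw [mem_coordRegion, dBound] at hc
    simp only [cutPaste]
    split_ifs at hc ⊢ <;> rw [mem_boxWithTail] <;> omega
  · rintro ⟨d, x, y⟩ hc
    rw [mem_boxWithTail] at hc
    simp only [pasteCut]
    split_ifs <;> rw [mem_coordRegion, dBound] <;> split_ifs <;> omega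
  · rintro ⟨d, x, y⟩ hc
    rw [mem_coordRegion, dBound] at hc
    simp only [cutPaste]
    split_ifs at hc ⊢ <;> simp only [pasteCut] <;> split_ifs <;> simp only [Prod.mk.injEq] <;>
      omega
  · rintro ⟨d, x, y⟩ hc
    rw [mem_boxWithTail] at hc
    simp only [pasteCut]
    split_ifs <;> simp only [cutPaste] <;> split_ifs <;> simp only [Prod.mk.injEq] <;> omega

lemma ncard_eq (hq : 0 < q) :
    ((Omega q (q ^ 3 - q) 0 0 (q ^ 3 + q ^ 2)).ncard : ℤ) = q ^ 3 + q ^ 2 + q := by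
  rw [← (bijOn_ofCoords hq).ncard_eq, Set.ncard_coe_finset, card_coordRegion,
    card_boxWithTail hq]

end Omega

theorem stmt_18_general (q : ℤ) (n : ℕ) (hn : (q : ℤ) = n + 1)
    (hn0 : 0 < n) :
    (∀ p ∈ Omega' q n, (∀ μ μ' : Fin n, p.2.2 μ = p.2.2 μ') ∧
        (∀ ν ν' : Fin n, p.2.1 ν = p.2.1 ν')) ∧
    Set.BijOn
      (fun p : ℤ × (Fin n → ℤ) × (Fin n → ℤ) =>
        (p.1, p.2.1 ⟨0, hn0⟩ - p.2.2 ⟨0, hn0⟩, p.2.2 ⟨0, hn0⟩))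
      (Omega' q n) (Omega q (q ^ 3 - q) 0 0 (q ^ 3 + q ^ 2)) ∧
    ((Omega' q n).ncard : ℤ) = q + (q ^ 3 + q ^ 2) := by
  have hq : 0 < q := by omega
  have hbij := Omega'.bijOn_Omega hn ⟨0, hn0⟩
  refine ⟨fun p hp ↦ ⟨Omega'.k_eq hq hp, Omega'.j_eq hq hp⟩, hbij, ?_⟩
  rw [hbij.ncard_eq, Omega.ncard_eq hq]
  ring

/-- The constraints defining Ω' force all k_μ equal and all j_ν equal; the map
    (i, j, k) ↦ (i, j₁ − k₁, k₁) is a bijection from Ω' onto Ω_{q³−q,0,0,q³+q²};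
    and consequently #Ω' = q + (q³+q²). -/
theorem stmt_18 (q : ℤ) (n : ℕ) (hq : 2 ≤ q) (hn : (q : ℤ) = n + 1)
    (hn0 : 0 < n) :
    (∀ p ∈ Omega' q n, (∀ μ μ' : Fin n, p.2.2 μ = p.2.2 μ') ∧
        (∀ ν ν' : Fin n, p.2.1 ν = p.2.1 ν')) ∧
    Set.BijOn
      (fun p : ℤ × (Fin n → ℤ) × (Fin n → ℤ) =>
        (p.1, p.2.1 ⟨0, hn0⟩ - p.2.2 ⟨0, hn0⟩, p.2.2 ⟨0, hn0⟩))
      (Omega' q n) (Omega q (q ^ 3 - q) 0 0 (q ^ 3 + q ^ 2)) ∧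
    ((Omega' q n).ncard : ℤ) = q + (q ^ 3 + q ^ 2) :=
  stmt_18_general q n hn hn0
end
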